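/- arXiv:1910.03537 — 11 statements merged into one kernel-verified Lean document; each statement's English description precedes it below -/
import Mathlib

section
/- Let n, a ≥ 1 be integers and let A, B ∈ ℂ^{n×a} be nonzero matrices. Then A A* ∘ B B* ≥ (1 / min(rank(A A*), rank(B B*))) · d_{A Bᵀ} d_{A Bᵀ}* in the Loewner order, where d_{A Bᵀ} is the vector of diagonal entries of A Bᵀ. -/
/-!
For `x : n → 𝕜` put `W = Bᵀ * diagonal (star x) * A` and `d = (A * Bᵀ).diag`. The quadratic form
of `(A * Aᴴ) ⊙ (B * Bᴴ)` at `x` is the squared Frobenius norm of `W`, and that of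
`vecMulVec d (star d)` is `‖trace W‖ ^ 2`. As `rank W ≤ min (rank A) (rank B)`, it suffices that
`‖trace W‖ ^ 2 ≤ rank W * ‖W‖_F ^ 2`. This is Cauchy–Schwarz for `trace W = ⟪P, W⟫_F`, where `P`
is the orthogonal projection onto the range of `W`, whose squared Frobenius norm is
`trace P = rank W`.
-/

open Matrix ComplexOrder WithLp

namespace Matrix

section Semiring

variable {R m k : Type*} [CommSemiring R] [Fintype m] [Fintype k] [DecidableEq m]

theorem trace_diagonal_mul (v : m → R) (M : Matrix m m R) :
    (diagonal v * M).trace = v ⬝ᵥ M.diag := by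
  simp [trace, dotProduct, diagonal_mul]

theorem star_dotProduct_hadamard_mul_conjTranspose_mulVec [StarRing R] (A B : Matrix m k R)
    (x : m → R) :
    star x ⬝ᵥ ((A * Aᴴ) ⊙ (B * Bᴴ) *ᵥ x) =
      (Bᵀ * diagonal (star x) * A * (Bᵀ * diagonal (star x) * A)ᴴ).trace := by
  rw [dotProduct_mulVec, dotProduct_vecMul_hadamard]
  conv_rhs => rw [Matrix.mul_assoc, Matrix.mul_assoc, trace_mul_comm]
  simp only [conjTranspose_mul, diagonal_conjTranspose, star_star, transpose_mul,
    diagonal_transpose, Matrix.mul_assoc, conjTranspose_transpose, transpose_conjTranspose]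

end Semiring

variable {𝕜 m k : Type*} [RCLike 𝕜] [Fintype m] [Fintype k]

theorem star_dotProduct_vecMulVec_diag_mulVec [DecidableEq m] (A B : Matrix m k 𝕜) (x : m → 𝕜) :
    star x ⬝ᵥ (vecMulVec (A * Bᵀ).diag (star (A * Bᵀ).diag) *ᵥ x) =
      ‖(Bᵀ * diagonal (star x) * A).trace‖ ^ 2 := by
  have htrace : (Bᵀ * diagonal (star x) * A).trace = star x ⬝ᵥ (A * Bᵀ).diag := by
    rw [trace_mul_comm, ← Matrix.mul_assoc, trace_mul_comm, trace_diagonal_mul]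
  rw [vecMulVec_mulVec, dotProduct_smul, htrace, ← RCLike.mul_conj, op_smul_eq_mul,
    ← RCLike.star_def, star_dotProduct, star_star]

theorem norm_toLp_vec_sq (M : Matrix m k 𝕜) : ‖toLp 2 M.vec‖ ^ 2 = ∑ i, ∑ j, ‖M i j‖ ^ 2 := by
  rw [EuclideanSpace.norm_sq_eq, Fintype.sum_prod_type, Finset.sum_comm]
  rfl

theorem inner_toLp_vec (M N : Matrix m k 𝕜) :
    inner 𝕜 (toLp 2 M.vec) (toLp 2 N.vec) = (Mᴴ * N).trace := by
  rw [EuclideanSpace.inner_toLp_toLp, dotProduct_comm, star_vec_dotProduct_vec]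

theorem trace_conjTranspose_mul_self_eq_norm_sq (M : Matrix m k 𝕜) :
    (Mᴴ * M).trace = (‖toLp 2 M.vec‖ ^ 2 : ℝ) := by
  rw [← inner_toLp_vec, inner_self_eq_norm_sq_to_K]
  push_cast
  rfl

theorem exists_isStarProjection_mul_eq_self_and_trace_eq_rank (W : Matrix m k 𝕜) :
    ∃ P : Matrix m m 𝕜, IsStarProjection P ∧ P * W = W ∧ P.trace = W.rank := by
  classical
  let K := LinearMap.range (toEuclideanLin W)
  let P := (toEuclideanCLM (n := m) (𝕜 := 𝕜)).symm K.starProjection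
  have hP : toEuclideanLin P = K.starProjection := by
    rw [← coe_toEuclideanCLM_eq_toEuclideanLin]
    simp [P]
  have hK : LinearMap.IsProj K (K.starProjection : _ →ₗ[𝕜] _) :=
    ⟨K.starProjection_apply_mem, fun _ => K.starProjection_eq_self_iff.mpr⟩
  refine ⟨P, isStarProjection_starProjection.map (toEuclideanCLM (n := m) (𝕜 := 𝕜)).symm, ?_, ?_⟩
  · apply toEuclideanLin.injective
    ext v : 1
    rw [toLpLin_mul_same, hP, LinearMap.comp_apply, ContinuousLinearMap.coe_coe,
      K.starProjection_eq_self_iff.mpr (LinearMap.mem_range_self _ v)]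
  · rw [← trace_toLin_eq P (EuclideanSpace.basisFun m 𝕜).toBasis,
      ← toEuclideanLin_eq_toLin_orthonormal, hP, hK.trace,
      rank_eq_finrank_range_toLin W (EuclideanSpace.basisFun m 𝕜).toBasis
        (EuclideanSpace.basisFun k 𝕜).toBasis]
    rfl

theorem norm_trace_sq_le_rank_mul_sum_norm_sq (W : Matrix m m 𝕜) :
    ‖W.trace‖ ^ 2 ≤ W.rank * ∑ i, ∑ j, ‖W i j‖ ^ 2 := by
  obtain ⟨P, hP, hPW, hPtrace⟩ := exists_isStarProjection_mul_eq_self_and_trace_eq_rank W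
  have hPH : Pᴴ = P := hP.isSelfAdjoint
  have hPnorm : ‖toLp 2 P.vec‖ ^ 2 = W.rank := by
    have := trace_conjTranspose_mul_self_eq_norm_sq P
    rw [hPH, hP.isIdempotentElem.eq, hPtrace] at this
    exact_mod_cast this.symm
  calc ‖W.trace‖ ^ 2 = ‖inner 𝕜 (toLp 2 P.vec) (toLp 2 W.vec)‖ ^ 2 := by
        rw [inner_toLp_vec, hPH, hPW]
    _ ≤ (‖toLp 2 P.vec‖ * ‖toLp 2 W.vec‖) ^ 2 := by gcongr; exact norm_inner_le_norm _ _
    _ = W.rank * ∑ i, ∑ j, ‖W i j‖ ^ 2 := by rw [mul_pow, hPnorm, norm_toLp_vec_sq]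

theorem posSemidef_hadamard_sub_vecMulVec_diag (A B : Matrix m k 𝕜) :
    ((A * Aᴴ) ⊙ (B * Bᴴ) - ((min A.rank B.rank : ℕ) : 𝕜)⁻¹ •
        vecMulVec (A * Bᵀ).diag (star (A * Bᵀ).diag)).PosSemidef := by
  classical
  rw [posSemidef_iff_dotProduct_mulVec]
  refine ⟨((isHermitian_mul_conjTranspose_self A).hadamard
      (isHermitian_mul_conjTranspose_self B)).sub
    ((posSemidef_vecMulVec_self_star _).isHermitian.smul (IsSelfAdjoint.natCast _).inv₀),
    fun x => ?_⟩
  rw [sub_mulVec, dotProduct_sub, smul_mulVec, dotProduct_smul,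
    star_dotProduct_hadamard_mul_conjTranspose_mulVec, star_dotProduct_vecMulVec_diag_mulVec,
    trace_mul_comm, trace_conjTranspose_mul_self_eq_norm_sq, norm_toLp_vec_sq]
  set W := Bᵀ * diagonal (star x) * A
  set r := min A.rank B.rank
  have hrank : W.rank ≤ r :=
    le_min (rank_mul_le_right _ _)
      (((rank_mul_le_left _ _).trans (rank_mul_le_left _ _)).trans (rank_transpose B).le)
  have hbound : (r : ℝ)⁻¹ * ‖W.trace‖ ^ 2 ≤ ∑ i, ∑ j, ‖W i j‖ ^ 2 :=
    inv_mul_le_of_le_mul₀ r.cast_nonneg (by positivity)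
      ((norm_trace_sq_le_rank_mul_sum_norm_sq W).trans (by gcongr))
  calc (0 : 𝕜) ≤ ((∑ i, ∑ j, ‖W i j‖ ^ 2 - (r : ℝ)⁻¹ * ‖W.trace‖ ^ 2 : ℝ) : 𝕜) :=
        RCLike.ofReal_nonneg.mpr (sub_nonneg.mpr hbound)
    _ = _ := by
      simp only [RCLike.ofReal_sub, RCLike.ofReal_mul, RCLike.ofReal_inv, RCLike.ofReal_natCast,
        RCLike.ofReal_pow, RCLike.ofReal_sum, smul_eq_mul]

end Matrix

theorem schur_product_lower_bound_min_rank_general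
    (n a : ℕ)
    (A B : Matrix (Fin n) (Fin a) ℂ) :
    ((A * Aᴴ).hadamard (B * Bᴴ) -
      ((min (A * Aᴴ).rank (B * Bᴴ).rank : ℕ) : ℂ)⁻¹ •
        vecMulVec (A * Bᵀ).diag (star (A * Bᵀ).diag)).PosSemidef := by
  rw [rank_self_mul_conjTranspose, rank_self_mul_conjTranspose]
  exact posSemidef_hadamard_sub_vecMulVec_diag A B

theorem schur_product_lower_bound_min_rank
    (n a : ℕ) (hn : 1 ≤ n) (ha : 1 ≤ a)
    (A B : Matrix (Fin n) (Fin a) ℂ) (hA : A ≠ 0) (hB : B ≠ 0) :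
    ((A * Aᴴ).hadamard (B * Bᴴ) -
      ((min (A * Aᴴ).rank (B * Bᴴ).rank : ℕ) : ℂ)⁻¹ •
        vecMulVec (A * Bᵀ).diag (star (A * Bᵀ).diag)).PosSemidef :=
  schur_product_lower_bound_min_rank_general n a A B
end

section
/- Let n, D ≥ 1 be integers and let A, B ∈ ℝ^{n×D} be nonzero real matrices with A Aᵀ = B Bᵀ = M. Then A Aᵀ ∘ B Bᵀ ≥ (1 / rank(M)) · d_{A Bᵀ} d_{A Bᵀ}ᵀ in the Loewner order. -/
/-!
For `x : ℝⁿ` put `T = Bᵀ · diag x · A`. Then `xᵀ (AAᵀ ∘ BBᵀ) x = tr (T Tᵀ)` and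
`x ⬝ d_{ABᵀ} = tr T`, so the claim is `(tr T)² ≤ rank A · tr (T Tᵀ)`. If `P` is the orthogonal
projection onto the row space of `T`, then `tr T = tr (T Pᵀ)`, and Cauchy–Schwarz for the
Frobenius inner product gives `(tr T)² ≤ tr (T Tᵀ) · tr P = rank T · tr (T Tᵀ)`, while
`rank T ≤ rank A = rank M`.
-/

open Matrix

namespace Matrix

variable {m n : Type*} [Fintype m] [Fintype n]

theorem exists_isStarProjection_mul_eq_self_trace_eq_rank {𝕜 : Type*} [RCLike 𝕜]
    (A : Matrix m n 𝕜) :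
    ∃ P : Matrix m m 𝕜, IsStarProjection P ∧ P * A = A ∧ P.trace = A.rank := by
  classical
  set K := LinearMap.range (toEuclideanLin A)
  set e := toEuclideanCLM (n := m) (𝕜 := 𝕜)
  set P := e.symm K.starProjection
  have hP : e P = K.starProjection := e.apply_symm_apply _
  refine ⟨P, isStarProjection_starProjection.map e.symm, ?_, ?_⟩
  · refine ext_of_mulVec_single fun j => ?_
    have hfix := K.starProjection_eq_self_iff.mpr
      (LinearMap.mem_range_self (toEuclideanLin A) (WithLp.toLp 2 (Pi.single j 1)))
    rw [← hP] at hfix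
    rw [← mulVec_mulVec]
    exact congrArg WithLp.ofLp hfix
  · have hproj : LinearMap.IsProj K (K.starProjection : _ →ₗ[𝕜] _) :=
      ⟨K.starProjection_apply_mem, fun _ => K.starProjection_eq_self_iff.mpr⟩
    rw [rank_eq_finrank_range_toLin A (EuclideanSpace.basisFun m 𝕜).toBasis
        (EuclideanSpace.basisFun n 𝕜).toBasis,
      ← toEuclideanLin_eq_toLin_orthonormal, ← hproj.trace, ← hP,
      ← trace_toLin_eq P (EuclideanSpace.basisFun m 𝕜).toBasis]
    rfl

theorem trace_mul_transpose_sq_le (X Y : Matrix m n ℝ) :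
    (X * Yᵀ).trace ^ 2 ≤ (X * Xᵀ).trace * (Y * Yᵀ).trace := by
  simp only [← sum_hadamard_eq, hadamard_apply, ← Fintype.sum_prod_type', ← sq]
  exact Finset.sum_mul_sq_le_sq_mul_sq _ _ _

theorem trace_sq_le_rank_mul_trace_mul_transpose (T : Matrix m m ℝ) :
    T.trace ^ 2 ≤ T.rank * (T * Tᵀ).trace := by
  obtain ⟨P, hP, hPT, htr⟩ := exists_isStarProjection_mul_eq_self_trace_eq_rank Tᵀ
  have hPsymm : Pᵀ = P := hP.isSelfAdjoint
  have hT : T * Pᵀ = T := by rw [← transpose_transpose T, ← transpose_mul, hPT]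
  have hPP : P * Pᵀ = P := by rw [hPsymm, hP.isIdempotentElem.eq]
  calc T.trace ^ 2 = (T * Pᵀ).trace ^ 2 := by rw [hT]
    _ ≤ (T * Tᵀ).trace * (P * Pᵀ).trace := trace_mul_transpose_sq_le T P
    _ = T.rank * (T * Tᵀ).trace := by rw [hPP, htr, rank_transpose, mul_comm]

theorem dotProduct_hadamard_self_mul_transpose_mulVec [DecidableEq m] (A B : Matrix m n ℝ)
    (x : m → ℝ) :
    x ⬝ᵥ ((A * Aᵀ) ⊙ (B * Bᵀ)) *ᵥ x =
      ((Bᵀ * diagonal x * A) * (Bᵀ * diagonal x * A)ᵀ).trace := by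
  rw [dotProduct_mulVec, dotProduct_vecMul_hadamard]
  simp only [transpose_mul, diagonal_transpose, transpose_transpose, Matrix.mul_assoc]
  rw [trace_mul_comm Bᵀ]
  simp only [Matrix.mul_assoc]

theorem dotProduct_diag_mul_transpose_eq_trace [DecidableEq m] (A B : Matrix m n ℝ)
    (x : m → ℝ) :
    x ⬝ᵥ (A * Bᵀ).diag = (Bᵀ * diagonal x * A).trace := by
  rw [Matrix.mul_assoc, trace_mul_comm]
  simp [trace, dotProduct, Matrix.mul_assoc]

theorem posSemidef_hadamard_sub_inv_rank_smul_vecMulVec_diag (A B : Matrix m n ℝ) :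
    ((A * Aᵀ) ⊙ (B * Bᵀ) -
      (A.rank : ℝ)⁻¹ • vecMulVec (A * Bᵀ).diag (A * Bᵀ).diag).PosSemidef := by
  classical
  have hAA := posSemidef_self_mul_conjTranspose A
  have hBB := posSemidef_self_mul_conjTranspose B
  rw [conjTranspose_eq_transpose_of_trivial] at hAA hBB
  refine posSemidef_iff_dotProduct_mulVec.mpr ⟨?_, fun x => ?_⟩
  · exact (hAA.hadamard hBB).isHermitian.sub
      ((posSemidef_vecMulVec_self_star (A * Bᵀ).diag).isHermitian.smul (IsSelfAdjoint.all _))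
  set T := Bᵀ * diagonal x * A
  have hTT : 0 ≤ (T * Tᵀ).trace := by
    simpa using (posSemidef_self_mul_conjTranspose T).trace_nonneg
  have hT : T.trace ^ 2 ≤ A.rank * (T * Tᵀ).trace :=
    (trace_sq_le_rank_mul_trace_mul_transpose T).trans <|
      mul_le_mul_of_nonneg_right (mod_cast rank_mul_le_right _ A) hTT
  rw [star_trivial, sub_mulVec, smul_mulVec, vecMulVec_mulVec, dotProduct_sub, dotProduct_smul,
    dotProduct_smul, dotProduct_comm _ x, dotProduct_diag_mul_transpose_eq_trace,
    dotProduct_hadamard_self_mul_transpose_mulVec, op_smul_eq_smul, smul_eq_mul, smul_eq_mul,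
    ← sq, sub_nonneg]
  exact inv_mul_le_of_le_mul₀ (Nat.cast_nonneg _) hTT hT

end Matrix

theorem schur_product_lower_bound_equal_gram_general
    (n D : ℕ)
    (A B : Matrix (Fin n) (Fin D) ℝ)
    (M : Matrix (Fin n) (Fin n) ℝ) (hAM : A * Aᵀ = M) :
    ((A * Aᵀ).hadamard (B * Bᵀ) -
      ((M.rank : ℝ))⁻¹ • vecMulVec (A * Bᵀ).diag (A * Bᵀ).diag).PosSemidef := by
  rw [← hAM, rank_self_mul_transpose]
  exact posSemidef_hadamard_sub_inv_rank_smul_vecMulVec_diag A B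

theorem schur_product_lower_bound_equal_gram
    (n D : ℕ) (hn : 1 ≤ n) (hD : 1 ≤ D)
    (A B : Matrix (Fin n) (Fin D) ℝ) (hA : A ≠ 0) (hB : B ≠ 0)
    (M : Matrix (Fin n) (Fin n) ℝ) (hAM : A * Aᵀ = M) (hBM : B * Bᵀ = M) :
    ((A * Aᵀ).hadamard (B * Bᵀ) -
      ((M.rank : ℝ))⁻¹ • vecMulVec (A * Bᵀ).diag (A * Bᵀ).diag).PosSemidef :=
  schur_product_lower_bound_equal_gram_general n D A B M hAM
end

section
/- Let n ≥ 1 and let M be an n × n complex correlation matrix, i.e., M is positive semidefinite with all diagonal entries equal to 1. Then M ∘ conj(M) ≥ (1/n) · E_n in the Loewner order, where conj(M) is the entrywise complex conjugate of M and E_n is the n × n all-ones matrix. -/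
open Matrix ComplexOrder

/-!
Write `M = Bᴴ B` and, for a test vector `x`, put `N = B diag(x) Bᴴ`. Then
`x* (M ∘ M̄) x = tr (N Nᴴ) = ∑ |N_ij|²`, while `tr N = ∑ x_k M_kk = ∑ x_k` because the diagonal
of `M` is `1`. Cauchy–Schwarz on the diagonal of `N` gives `|∑ x_k|² ≤ n ∑ |N_ij|²`, which is the
claimed inequality `x* (M ∘ M̄) x ≥ x* (E_n / n) x`.
-/

namespace Matrix

variable {𝕜 m n : Type*} [RCLike 𝕜] [Fintype m] [Fintype n]

theorem PosSemidef.exists_eq_conjTranspose_mul_self {M : Matrix n n 𝕜} (hM : M.PosSemidef) :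
    ∃ B : Matrix n n 𝕜, M = Bᴴ * B := by
  classical
  open scoped MatrixOrder in
  exact CStarAlgebra.nonneg_iff_eq_star_mul_self.mp hM.nonneg

theorem trace_mul_conjTranspose_self_eq_sum_norm_sq (A : Matrix m n 𝕜) :
    (A * Aᴴ).trace = ((∑ i, ∑ j, ‖A i j‖ ^ 2 : ℝ) : 𝕜) := by
  simp [trace, mul_apply, RCLike.mul_conj]

theorem norm_trace_sq_le_card_mul_sum_norm_sq (A : Matrix n n 𝕜) :
    ‖A.trace‖ ^ 2 ≤ Fintype.card n * ∑ i, ∑ j, ‖A i j‖ ^ 2 :=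
  calc ‖A.trace‖ ^ 2 ≤ (∑ i, ‖A i i‖) ^ 2 := by
        gcongr; exact norm_sum_le _ _
    _ ≤ Fintype.card n * ∑ i, ‖A i i‖ ^ 2 := sq_sum_le_card_mul_sum_sq
    _ ≤ Fintype.card n * ∑ i, ∑ j, ‖A i j‖ ^ 2 := by
        gcongr with i
        exact Finset.single_le_sum (f := fun j => ‖A i j‖ ^ 2) (fun _ _ => by positivity)
          (Finset.mem_univ i)

theorem star_dotProduct_of_one_mulVec (x : n → 𝕜) :
    star x ⬝ᵥ of (fun _ _ : n => (1 : 𝕜)) *ᵥ x = ((‖∑ i, x i‖ ^ 2 : ℝ) : 𝕜) := by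
  simp [dotProduct, mulVec, ← Finset.sum_mul, ← map_sum, RCLike.conj_mul]

variable [DecidableEq n]

theorem star_dotProduct_hadamard_map_star_mulVec (B : Matrix m n 𝕜) (x : n → 𝕜) :
    star x ⬝ᵥ ((Bᴴ * B) ⊙ (Bᴴ * B).map star) *ᵥ x =
      ((B * diagonal x * Bᴴ) * (B * diagonal x * Bᴴ)ᴴ).trace := by
  have hP : ((Bᴴ * B).map star)ᵀ = Bᴴ * B := by
    rw [← transpose_map]
    exact (isHermitian_conjTranspose_mul_self B).eq
  rw [dotProduct_mulVec, dotProduct_vecMul_hadamard, transpose_mul, hP, diagonal_transpose,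
    conjTranspose_mul, conjTranspose_mul, conjTranspose_conjTranspose, diagonal_conjTranspose,
    trace_mul_comm (diagonal (star x) * _)]
  simp only [Matrix.mul_assoc]
  rw [trace_mul_comm B]
  simp only [Matrix.mul_assoc]

theorem trace_mul_diagonal_mul_conjTranspose (B : Matrix m n 𝕜) (x : n → 𝕜) :
    (B * diagonal x * Bᴴ).trace = ∑ k, (Bᴴ * B) k k * x k := by
  rw [trace_mul_cycle]
  simp [trace, mul_diagonal]

theorem PosSemidef.hadamard_map_star_sub_inv_card_smul_of_one {M : Matrix n n 𝕜}
    (hM : M.PosSemidef) (hdiag : ∀ i, M i i = 1) :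
    (M ⊙ M.map star - (Fintype.card n : 𝕜)⁻¹ • of (fun _ _ : n => (1 : 𝕜))).PosSemidef := by
  have hherm : (M ⊙ M.map star).IsHermitian :=
    hM.isHermitian.hadamard (hM.isHermitian.map star fun _ => rfl)
  refine .of_dotProduct_mulVec_nonneg (hherm.sub (by ext; simp)) fun x => ?_
  obtain ⟨B, rfl⟩ := hM.exists_eq_conjTranspose_mul_self
  have htrace : (B * diagonal x * Bᴴ).trace = ∑ i, x i := by
    simp [trace_mul_diagonal_mul_conjTranspose, hdiag]
  rw [sub_mulVec, dotProduct_sub, smul_mulVec, dotProduct_smul,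
    star_dotProduct_hadamard_map_star_mulVec, trace_mul_conjTranspose_self_eq_sum_norm_sq,
    star_dotProduct_of_one_mulVec, ← htrace, smul_eq_mul]
  rw [← RCLike.ofReal_natCast, ← RCLike.ofReal_inv, ← RCLike.ofReal_mul, ← RCLike.ofReal_sub,
    RCLike.ofReal_nonneg, sub_nonneg]
  exact inv_mul_le_of_le_mul₀ (by positivity) (by positivity)
    (norm_trace_sq_le_card_mul_sum_norm_sq _)

end Matrix

theorem correlation_schur_product_lower_bound_general
    (n : ℕ) (M : Matrix (Fin n) (Fin n) ℂ)
    (hM : M.PosSemidef) (hdiag : ∀ i, M i i = 1) :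
    (M.hadamard (M.map (starRingEnd ℂ)) -
      ((n : ℂ))⁻¹ • Matrix.of (fun _ _ : Fin n => (1 : ℂ))).PosSemidef := by
  simpa using hM.hadamard_map_star_sub_inv_card_smul_of_one hdiag

theorem correlation_schur_product_lower_bound
    (n : ℕ) (hn : 1 ≤ n) (M : Matrix (Fin n) (Fin n) ℂ)
    (hM : M.PosSemidef) (hdiag : ∀ i, M i i = 1) :
    (M.hadamard (M.map (starRingEnd ℂ)) -
      ((n : ℂ))⁻¹ • Matrix.of (fun _ _ : Fin n => (1 : ℂ))).PosSemidef :=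
  correlation_schur_product_lower_bound_general n M hM hdiag
end

section
/- Let n ≥ 1 and let A, B ∈ ℂ^{n×n}. Set M = A A*, N = B B*, and w = (A ∘ B) e, where e = (1, …, 1)ᵀ ∈ ℂ^n. Then M ∘ N ≥ (1/n) · w w* in the Loewner order. -/
/-!
Let `C` be the face-splitting product of `A` and `B`, whose `i`-th row is the Kronecker product
of the `i`-th rows of `A` and `B`. Then `M ∘ N = C C*` and `w = C u` with `u = vec I`, so that
`u* u = n`. Hence `M ∘ N - (1/n) w w* = C P C*`, where `P = I - u u* / (u* u)` is the orthogonal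
projection onto the complement of `u`, and is therefore positive semidefinite.
-/

open Matrix ComplexOrder

namespace Matrix

variable {ι κ μ α 𝕜 : Type*}

def faceSplitting [Mul α] (A : Matrix ι κ α) (B : Matrix ι μ α) : Matrix ι (κ × μ) α :=
  of fun i pq => A i pq.1 * B i pq.2

theorem mul_conjTranspose_hadamard_mul_conjTranspose [Fintype κ] [Fintype μ] [CommSemiring α]
    [StarRing α] (A : Matrix ι κ α) (B : Matrix ι μ α) :
    (A * Aᴴ) ⊙ (B * Bᴴ) = faceSplitting A B * (faceSplitting A B)ᴴ := by
  ext i j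
  simp only [hadamard_apply, mul_apply, conjTranspose_apply, faceSplitting, of_apply,
    Fintype.sum_prod_type, Finset.sum_mul_sum, star_mul']
  exact Finset.sum_congr rfl fun _ _ => Finset.sum_congr rfl fun _ _ => by ring

theorem hadamard_mulVec_one [Fintype κ] [DecidableEq κ] [NonAssocSemiring α]
    (A B : Matrix ι κ α) : (A ⊙ B) *ᵥ 1 = faceSplitting A B *ᵥ vec 1 := by
  ext i
  simp [mulVec, dotProduct, faceSplitting, vec, Fintype.sum_prod_type, one_apply]

theorem star_vec_one_dotProduct_vec_one [Fintype κ] [DecidableEq κ] [NonAssocSemiring α]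
    [StarRing α] : star (vec (1 : Matrix κ κ α)) ⬝ᵥ vec 1 = Fintype.card κ := by
  simp [star_vec_dotProduct_vec]

theorem isStarProjection_inv_smul_vecMulVec [Fintype κ] [Field 𝕜] [StarRing 𝕜]
    (u : κ → 𝕜) : IsStarProjection ((star u ⬝ᵥ u)⁻¹ • vecMulVec u (star u)) := by
  constructor
  · rw [IsIdempotentElem, smul_mul_smul, vecMulVec_mul_vecMulVec, vecMulVec_smul, smul_smul]
    congr 1
    simpa using mul_self_mul_inv (star u ⬝ᵥ u)⁻¹
  · rw [IsSelfAdjoint, star_smul, star_inv₀, ← star_dotProduct, star_eq_conjTranspose,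
      conjTranspose_vecMulVec, star_star]

theorem mul_vecMulVec_mul_conjTranspose [Fintype κ] [CommSemiring α] [StarRing α]
    (C : Matrix ι κ α) (u : κ → α) :
    C * vecMulVec u (star u) * Cᴴ = vecMulVec (C *ᵥ u) (star (C *ᵥ u)) := by
  rw [mul_vecMulVec, vecMulVec_mul, star_mulVec]

open scoped MatrixOrder in
theorem posSemidef_one_sub_inv_smul_vecMulVec [Fintype κ] [DecidableEq κ] [RCLike 𝕜]
    (u : κ → 𝕜) : (1 - (star u ⬝ᵥ u)⁻¹ • vecMulVec u (star u)).PosSemidef :=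
  nonneg_iff_posSemidef.mp (isStarProjection_inv_smul_vecMulVec u).one_sub.nonneg

end Matrix

theorem schur_product_lower_bound_hadamard_row_sums_general
    (n : ℕ) (A B : Matrix (Fin n) (Fin n) ℂ)
    (M N : Matrix (Fin n) (Fin n) ℂ) (hM : M = A * Aᴴ) (hN : N = B * Bᴴ)
    (w : Fin n → ℂ) (hw : w = (A.hadamard B) *ᵥ (fun _ => (1 : ℂ))) :
    (M.hadamard N - ((n : ℂ))⁻¹ • vecMulVec w (star w)).PosSemidef := by
  set C := faceSplitting A B
  set u : Fin n × Fin n → ℂ := vec 1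
  have hu : star u ⬝ᵥ u = n := by
    simpa using star_vec_one_dotProduct_vec_one (κ := Fin n) (α := ℂ)
  have hMN : M ⊙ N = C * Cᴴ := hM ▸ hN ▸ mul_conjTranspose_hadamard_mul_conjTranspose A B
  have hwu : w = C *ᵥ u := hw ▸ hadamard_mulVec_one A B
  have hsplit : M ⊙ N - (n : ℂ)⁻¹ • vecMulVec w (star w)
      = C * (1 - (star u ⬝ᵥ u)⁻¹ • vecMulVec u (star u)) * Cᴴ := by
    rw [hMN, hwu, hu, Matrix.mul_sub, Matrix.sub_mul, Matrix.mul_one, Matrix.mul_smul,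
      Matrix.smul_mul, mul_vecMulVec_mul_conjTranspose]
  exact hsplit ▸ (posSemidef_one_sub_inv_smul_vecMulVec u).mul_mul_conjTranspose_same C

theorem schur_product_lower_bound_hadamard_row_sums
    (n : ℕ) (hn : 1 ≤ n) (A B : Matrix (Fin n) (Fin n) ℂ)
    (M N : Matrix (Fin n) (Fin n) ℂ) (hM : M = A * Aᴴ) (hN : N = B * Bᴴ)
    (w : Fin n → ℂ) (hw : w = (A.hadamard B) *ᵥ (fun _ => (1 : ℂ))) :
    (M.hadamard N - ((n : ℂ))⁻¹ • vecMulVec w (star w)).PosSemidef :=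
  schur_product_lower_bound_hadamard_row_sums_general n A B M N hM hN w hw
end

section
/- Let n ≥ 1 and let A, B ∈ ℂ^{n×n}. Then A A* ∘ B B* ≥ (A ∘ B)(A ∘ B)* in the Loewner order. -/
/-!
Write `a_k`, `b_l` for the columns of `A`, `B`. Then
`A A* ∘ B B* = ∑_{k,l} (a_k ∘ b_l)(a_k ∘ b_l)*`, while
`(A ∘ B)(A ∘ B)* = ∑_k (a_k ∘ b_k)(a_k ∘ b_k)*` collects exactly the terms with `k = l`.
The difference is the sum over `k ≠ l`, a Gram matrix and hence positive semidefinite.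
-/

open Matrix ComplexOrder

namespace Matrix

variable {m ι κ R : Type*}

/-- The face-splitting product: row `i` of `faceSplit A B` is the Kronecker product of the rows
`i` of `A` and `B`. -/
def faceSplit [Mul R] (A : Matrix m ι R) (B : Matrix m κ R) : Matrix m (ι × κ) R :=
  of fun i p => A i p.1 * B i p.2

theorem hadamard_mul_conjTranspose [Fintype ι] [Fintype κ] [CommSemiring R] [StarRing R]
    (A C : Matrix m ι R) (B D : Matrix m κ R) :
    (A * Cᴴ) ⊙ (B * Dᴴ) = faceSplit A B * (faceSplit C D)ᴴ := by
  ext i j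
  simp only [hadamard_apply, mul_apply, conjTranspose_apply, faceSplit, of_apply, star_mul',
    Fintype.sum_prod_type, Finset.sum_mul_sum]
  exact Finset.sum_congr rfl fun _ _ => Finset.sum_congr rfl fun _ _ => by ring

theorem mul_conjTranspose_eq_add_subtype [Fintype ι] [NonUnitalSemiring R] [Star R]
    (M : Matrix m ι R) (p : ι → Prop) [DecidablePred p] :
    M * Mᴴ = M.submatrix id (Subtype.val : {k // p k} → ι) *
          (M.submatrix id (Subtype.val : {k // p k} → ι))ᴴ +
        M.submatrix id (Subtype.val : {k // ¬p k} → ι) *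
          (M.submatrix id (Subtype.val : {k // ¬p k} → ι))ᴴ := by
  ext i j
  simp only [add_apply, mul_apply, conjTranspose_apply]
  exact (Fintype.sum_subtype_add_sum_subtype p _).symm

def diagonalSubtypeEquiv (ι : Type*) : {p : ι × ι // p.1 = p.2} ≃ ι where
  toFun p := p.val.1
  invFun k := ⟨(k, k), rfl⟩
  left_inv := by
    rintro ⟨⟨k, l⟩, h : k = l⟩
    subst h
    rfl
  right_inv _ := rfl

theorem submatrix_equiv_mul_conjTranspose [Fintype ι] [Fintype κ] [NonUnitalSemiring R] [Star R]
    (M : Matrix m ι R) (e : κ ≃ ι) :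
    M.submatrix id e * (M.submatrix id e)ᴴ = M * Mᴴ := by
  rw [conjTranspose_submatrix, submatrix_mul_equiv, submatrix_id_id]

theorem faceSplit_submatrix_diagonal [Mul R] (A B : Matrix m ι R) :
    (faceSplit A B).submatrix id (Subtype.val : {p : ι × ι // p.1 = p.2} → ι × ι) =
      (A ⊙ B).submatrix id (diagonalSubtypeEquiv ι) := by
  ext i ⟨⟨k, l⟩, h : k = l⟩
  subst h
  rfl

theorem faceSplit_submatrix_diagonal_mul_conjTranspose [Fintype ι] [DecidableEq ι]
    [NonUnitalSemiring R] [Star R] (A B : Matrix m ι R) :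
    (faceSplit A B).submatrix id (Subtype.val : {p : ι × ι // p.1 = p.2} → ι × ι) *
        ((faceSplit A B).submatrix id (Subtype.val : {p : ι × ι // p.1 = p.2} → ι × ι))ᴴ =
      A ⊙ B * (A ⊙ B)ᴴ := by
  rw [faceSplit_submatrix_diagonal, submatrix_equiv_mul_conjTranspose]

theorem posSemidef_mul_conjTranspose_hadamard_sub [Finite m] [Fintype ι] [DecidableEq ι]
    [CommRing R] [StarRing R] [PartialOrder R] [StarOrderedRing R] (A B : Matrix m ι R) :
    ((A * Aᴴ) ⊙ (B * Bᴴ) - A ⊙ B * (A ⊙ B)ᴴ).PosSemidef := by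
  rw [hadamard_mul_conjTranspose, mul_conjTranspose_eq_add_subtype _ (fun p => p.1 = p.2),
    faceSplit_submatrix_diagonal_mul_conjTranspose, add_sub_cancel_left]
  exact posSemidef_self_mul_conjTranspose _

end Matrix

theorem schur_product_lower_bound_entrywise_general
    (n : ℕ) (A B : Matrix (Fin n) (Fin n) ℂ) :
    ((A * Aᴴ).hadamard (B * Bᴴ) -
      (A.hadamard B) * (A.hadamard B)ᴴ).PosSemidef :=
  posSemidef_mul_conjTranspose_hadamard_sub A B

theorem schur_product_lower_bound_entrywise
    (n : ℕ) (hn : 1 ≤ n) (A B : Matrix (Fin n) (Fin n) ℂ) :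
    ((A * Aᴴ).hadamard (B * Bᴴ) -
      (A.hadamard B) * (A.hadamard B)ᴴ).PosSemidef :=
  schur_product_lower_bound_entrywise_general n A B
end

section
/- Let n, a, b ≥ 1 be integers and let A ∈ ℂ^{n×a} and B ∈ ℂ^{n×b} be nonzero matrices. Define the vector w ∈ ℂ^n by w_j = Σ_{k=1}^{min(a,b)} a_{jk} b_{jk} (equivalently, w is the diagonal of A₀ B₀ᵀ where A₀, B₀ are obtained from A, B by appending zero columns on the right until both have the same number of columns). Then A A* ∘ B B* ≥ (1 / min(rank(A A*), rank(B B*))) · w w* in the Loewner order. -/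
/-! Fix `x` and put `C = Aᵀ * diagonal (star x) * B`. The quadratic form of `A Aᴴ ⊙ B Bᴴ` at `x`
is the squared Frobenius norm of `C`, while `star x ⬝ᵥ w` is the trace of the square submatrix of
`C` picked out by the two column embeddings, whose rank is at most `min (rank A) (rank B)`. For a
square matrix `M` with `P` the orthogonal projection onto its range, `M = P * M`, and Cauchy–Schwarz
gives `‖tr M‖² = ‖∑ P i j * M j i‖² ≤ ‖P‖² ‖M‖² = rank M * ‖M‖²` in Frobenius norms. -/

open Matrix ComplexOrder Function

lemma Finset.norm_sum_mul_sq_le {𝕜 ι : Type*} [RCLike 𝕜] (s : Finset ι) (f g : ι → 𝕜) :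
    ‖∑ i ∈ s, f i * g i‖ ^ 2 ≤ (∑ i ∈ s, ‖f i‖ ^ 2) * ∑ i ∈ s, ‖g i‖ ^ 2 :=
  calc ‖∑ i ∈ s, f i * g i‖ ^ 2 ≤ (∑ i ∈ s, ‖f i‖ * ‖g i‖) ^ 2 := by
        gcongr
        exact (norm_sum_le _ _).trans_eq (by simp only [norm_mul])
    _ ≤ _ := Finset.sum_mul_sq_le_sq_mul_sq _ _ _

lemma Fintype.sum_comp_le_sum_of_injective {α β : Type*} [Fintype α] [Fintype β] {e : α → β}
    (he : Injective e) {f : β → ℝ} (hf : 0 ≤ f) : ∑ a, f (e a) ≤ ∑ b, f b := by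
  classical
  rw [← Finset.sum_image fun x _ y _ h => he h]
  exact Finset.sum_le_univ_sum_of_nonneg hf

namespace Matrix

variable {𝕜 : Type*} [RCLike 𝕜]

section Projection

variable {m n : Type*} [Fintype m] [Fintype n] [DecidableEq m]

omit [DecidableEq m] in
lemma mul_eq_self_of_mul_self_mul_conjTranspose {P : Matrix m m 𝕜} (hP : P.IsHermitian)
    {C : Matrix m n 𝕜} (h : P * (C * Cᴴ) = C * Cᴴ) : P * C = C := by
  have h' : C * Cᴴ * P = C * Cᴴ := by
    simpa [Matrix.mul_assoc, hP.eq] using congrArg conjTranspose h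
  have : (C - P * C) * (C - P * C)ᴴ = 0 := by
    simp only [conjTranspose_sub, conjTranspose_mul, hP.eq, Matrix.sub_mul, Matrix.mul_sub,
      ← Matrix.mul_assoc, h']
    simp only [Matrix.mul_assoc, h]
    simp only [← Matrix.mul_assoc, h']
    abel
  exact (sub_eq_zero.mp (self_mul_conjTranspose_eq_zero.mp this)).symm

lemma IsHermitian.exists_projection_mul_eq_self {H : Matrix m m 𝕜} (hH : H.IsHermitian) :
    ∃ P : Matrix m m 𝕜, P.IsHermitian ∧ P * P = P ∧ P * H = H ∧ P.trace = H.rank := by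
  have hc (f : ℝ → ℝ) : ContinuousOn f (spectrum ℝ H) := H.finite_real_spectrum.continuousOn f
  let s : ℝ → ℝ := fun x => if x = 0 then 0 else 1
  refine ⟨cfc s H, cfc_predicate _ H, ?_, ?_, ?_⟩
  · rw [← cfc_mul _ _ _ (hc _) (hc _)]
    exact cfc_congr fun x _ => by simp only [s]; split_ifs <;> simp
  · nth_rw 2 [← cfc_id' ℝ H]
    rw [← cfc_mul _ _ _ (hc _) (hc _)]
    conv_rhs => rw [← cfc_id' ℝ H]
    exact cfc_congr fun x _ => by simp only [s]; split_ifs <;> simp_all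
  · rw [hH.cfc_eq, IsHermitian.cfc, Unitary.conjStarAlgAut_apply, trace_mul_cycle,
      Unitary.star_mul_self_of_mem (SetLike.coe_mem _), one_mul, trace_diagonal,
      hH.rank_eq_card_non_zero_eigs, Fintype.card_subtype]
    simp [s, apply_ite, Finset.sum_ite]

lemma exists_projection_mul_eq_self (C : Matrix m n 𝕜) :
    ∃ P : Matrix m m 𝕜, P.IsHermitian ∧ P * P = P ∧ P * C = C ∧ P.trace = C.rank := by
  obtain ⟨P, hP, hPP, hPH, htr⟩ :=
    (isHermitian_mul_conjTranspose_self C).exists_projection_mul_eq_self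
  exact ⟨P, hP, hPP, mul_eq_self_of_mul_self_mul_conjTranspose hP hPH,
    by rw [htr, rank_self_mul_conjTranspose]⟩

omit [DecidableEq m] in
lemma ofReal_sum_norm_sq_eq_trace_mul_conjTranspose (M : Matrix m n 𝕜) :
    ((∑ i, ∑ j, ‖M i j‖ ^ 2 : ℝ) : 𝕜) = (M * Mᴴ).trace := by
  simp only [trace, diag_apply, mul_apply, conjTranspose_apply, RCLike.star_def, RCLike.mul_conj]
  push_cast
  rfl

end Projection

variable {n : Type*} [Fintype n] [DecidableEq n]

theorem norm_trace_sq_le_rank_mul (M : Matrix n n 𝕜) :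
    ‖M.trace‖ ^ 2 ≤ M.rank * ∑ i, ∑ j, ‖M i j‖ ^ 2 := by
  obtain ⟨P, hP, hPP, hPM, htr⟩ := exists_projection_mul_eq_self M
  have hPnorm : ∑ i, ∑ j, ‖P i j‖ ^ 2 = (M.rank : ℝ) := by
    apply RCLike.ofReal_injective (K := 𝕜)
    rw [ofReal_sum_norm_sq_eq_trace_mul_conjTranspose, hP.eq, hPP, htr]
    simp
  calc ‖M.trace‖ ^ 2 = ‖∑ p ∈ Finset.univ ×ˢ Finset.univ, P p.1 p.2 * M p.2 p.1‖ ^ 2 := by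
        rw [Finset.sum_product]
        conv_lhs => rw [← hPM]
        rfl
    _ ≤ (∑ p ∈ Finset.univ ×ˢ Finset.univ, ‖P p.1 p.2‖ ^ 2) *
          ∑ p ∈ Finset.univ ×ˢ Finset.univ, ‖M p.2 p.1‖ ^ 2 := Finset.norm_sum_mul_sq_le _ _ _
    _ = M.rank * ∑ i, ∑ j, ‖M i j‖ ^ 2 := by
        rw [Finset.sum_product, Finset.sum_product, hPnorm, Finset.sum_comm]

section Hadamard

variable {ι α β κ : Type*} [Fintype ι] [Fintype α] [Fintype β] [Fintype κ]

omit [Fintype ι] in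
lemma sum_norm_sq_submatrix_le (C : Matrix α β 𝕜) {i : κ → α} {j : κ → β} (hi : Injective i)
    (hj : Injective j) :
    ∑ s, ∑ t, ‖C.submatrix i j s t‖ ^ 2 ≤ ∑ s, ∑ t, ‖C s t‖ ^ 2 := by
  simp only [← Fintype.sum_prod_type']
  exact Fintype.sum_comp_le_sum_of_injective (e := Prod.map i j) (hi.prodMap hj)
    (f := fun p => ‖C p.1 p.2‖ ^ 2) fun _ => by positivity

omit [Fintype α] [Fintype β] in
lemma transpose_mul_diagonal_mul_apply [DecidableEq ι] {R : Type*} [CommSemiring R]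
    (A : Matrix ι α R) (B : Matrix ι β R) (d : ι → R) (s : α) (t : β) :
    (Aᵀ * diagonal d * B) s t = ∑ j, A j s * (d j * B j t) := by
  simp only [Matrix.mul_assoc, mul_apply (M := Aᵀ), diagonal_mul, transpose_apply]

lemma star_dotProduct_hadamard_mulVec [DecidableEq ι] (A : Matrix ι α 𝕜) (B : Matrix ι β 𝕜)
    (x : ι → 𝕜) :
    star x ⬝ᵥ ((A * Aᴴ) ⊙ (B * Bᴴ)) *ᵥ x =
      (Aᵀ * diagonal (star x) * B * (Aᵀ * diagonal (star x) * B)ᴴ).trace := by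
  simp only [trace, diag_apply, mul_apply (M := Aᵀ * diagonal (star x) * B), conjTranspose_apply]
  simp only [transpose_mul_diagonal_mul_apply]
  simp only [dotProduct, mulVec, hadamard_apply, mul_apply, conjTranspose_apply, Finset.mul_sum,
    Finset.sum_mul, star_sum, star_mul', Pi.star_apply, star_star]
  simp_rw [Finset.sum_comm (γ := ι) (α := β), Finset.sum_comm (γ := ι) (α := α),
    Finset.sum_comm (γ := β) (α := α)]
  refine Finset.sum_congr rfl fun s _ => Finset.sum_congr rfl fun t _ => ?_
  rw [Finset.sum_comm]
  exact Finset.sum_congr rfl fun k _ => Finset.sum_congr rfl fun j _ => by ring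

lemma star_dotProduct_vecMulVec_mulVec (w x : ι → 𝕜) :
    star x ⬝ᵥ vecMulVec w (star w) *ᵥ x = ((‖star x ⬝ᵥ w‖ ^ 2 : ℝ) : 𝕜) := by
  rw [vecMulVec_mulVec, dotProduct_smul, op_smul_eq_mul, star_dotProduct (v := w),
    RCLike.star_def, RCLike.mul_conj, RCLike.ofReal_pow]

theorem posSemidef_hadamard_sub_inv_min_rank_smul_vecMulVec (A : Matrix ι α 𝕜)
    (B : Matrix ι β 𝕜) {i : κ → α} {j : κ → β} (hi : Injective i) (hj : Injective j)
    {w : ι → 𝕜} (hw : ∀ l, w l = ∑ t, A l (i t) * B l (j t)) :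
    ((A * Aᴴ) ⊙ (B * Bᴴ) - ((min (A * Aᴴ).rank (B * Bᴴ).rank : ℕ) : 𝕜)⁻¹ •
      vecMulVec w (star w)).PosSemidef := by
  classical
  set r := min (A * Aᴴ).rank (B * Bᴴ).rank
  rw [posSemidef_iff_dotProduct_mulVec]
  refine ⟨((isHermitian_mul_conjTranspose_self A).hadamard
    (isHermitian_mul_conjTranspose_self B)).sub
    ((posSemidef_vecMulVec_self_star w).isHermitian.smul (IsSelfAdjoint.natCast r).inv₀),
    fun x => ?_⟩
  set C := Aᵀ * diagonal (star x) * B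
  have hxw : star x ⬝ᵥ w = (C.submatrix i j).trace := by
    simp only [C, trace, diag_apply, submatrix_apply, transpose_mul_diagonal_mul_apply, hw,
      dotProduct, Pi.star_apply, Finset.mul_sum]
    rw [Finset.sum_comm]
    exact Finset.sum_congr rfl fun t _ => Finset.sum_congr rfl fun l _ => by ring
  have hrank : (C.submatrix i j).rank ≤ r := by
    refine (rank_submatrix_le C i j).trans (le_min ?_ ?_)
    · rw [rank_self_mul_conjTranspose, ← rank_transpose A]
      exact (rank_mul_le_left _ _).trans (rank_mul_le_left _ _)
    · rw [rank_self_mul_conjTranspose]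
      exact rank_mul_le_right _ _
  have hbound : ‖star x ⬝ᵥ w‖ ^ 2 ≤ r * ∑ s, ∑ t, ‖C s t‖ ^ 2 := by
    rw [hxw]
    refine (norm_trace_sq_le_rank_mul _).trans (mul_le_mul (by exact_mod_cast hrank)
      (sum_norm_sq_submatrix_le C hi hj) (by positivity) (by positivity))
  rw [sub_mulVec, dotProduct_sub, smul_mulVec, dotProduct_smul, star_dotProduct_hadamard_mulVec,
    star_dotProduct_vecMulVec_mulVec, ← ofReal_sum_norm_sq_eq_trace_mul_conjTranspose, smul_eq_mul,
    ← RCLike.ofReal_natCast, ← RCLike.ofReal_inv, ← RCLike.ofReal_mul, ← RCLike.ofReal_sub,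
    RCLike.ofReal_nonneg, sub_nonneg]
  exact inv_mul_le_of_le_mul₀ (by positivity) (by positivity) hbound

end Hadamard

end Matrix

theorem schur_product_lower_bound_rectangular_general
    (n a b : ℕ)
    (A : Matrix (Fin n) (Fin a) ℂ) (B : Matrix (Fin n) (Fin b) ℂ)
    (w : Fin n → ℂ)
    (hw : w = fun j => ∑ t : Fin (min a b),
      A j (Fin.castLE (min_le_left a b) t) * B j (Fin.castLE (min_le_right a b) t)) :
    ((A * Aᴴ).hadamard (B * Bᴴ) -
      ((min (A * Aᴴ).rank (B * Bᴴ).rank : ℕ) : ℂ)⁻¹ •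
        vecMulVec w (star w)).PosSemidef :=
  posSemidef_hadamard_sub_inv_min_rank_smul_vecMulVec A B (Fin.castLE_injective _)
    (Fin.castLE_injective _) (congrFun hw)

theorem schur_product_lower_bound_rectangular
    (n a b : ℕ) (hn : 1 ≤ n) (ha : 1 ≤ a) (hb : 1 ≤ b)
    (A : Matrix (Fin n) (Fin a) ℂ) (B : Matrix (Fin n) (Fin b) ℂ)
    (hA : A ≠ 0) (hB : B ≠ 0)
    (w : Fin n → ℂ)
    (hw : w = fun j => ∑ t : Fin (min a b),
      A j (Fin.castLE (min_le_left a b) t) * B j (Fin.castLE (min_le_right a b) t)) :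
    ((A * Aᴴ).hadamard (B * Bᴴ) -
      ((min (A * Aᴴ).rank (B * Bᴴ).rank : ℕ) : ℂ)⁻¹ •
        vecMulVec w (star w)).PosSemidef :=
  schur_product_lower_bound_rectangular_general n a b A B w hw
end

section
/- Let n, k ≥ 1 and fix vectors u_1, y_1, …, u_k, y_k ∈ ℂ^n such that the vector w = (u_1 ∘ y_1) ∘ ⋯ ∘ (u_k ∘ y_k) is nonzero; let J(w) = {j : w_j ≠ 0}. Let M_1, …, M_k be n × n complex positive semidefinite matrices, set M = M_1 ∘ ⋯ ∘ M_k, and assume the principal submatrix M_{J(w)×J(w)} is nonzero. Then (D_{u_1} M_1 D_{u_1}* ∘ D_{y_1} conj(M_1) D_{y_1}*) ∘ ⋯ ∘ (D_{u_k} M_k D_{u_k}* ∘ D_{y_k} conj(M_k) D_{y_k}*) ≥ (1 / rank(M_{J(w)×J(w)})) · z z* in the Loewner order, where z = w ∘ d_{M_1} ∘ ⋯ ∘ d_{M_k}. -/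
/-!
By the spectral theorem a positive semidefinite `P` is `∑_{l ∈ T} v_l v_l*` with `#T = rank P`.
Then `P ∘ conj P = ∑_{l, p ∈ T} b_{lp} b_{lp}*` with `b_{lp} = v_l ∘ conj v_p`, while
`d_P = ∑_{l ∈ T} b_{ll}`, so `P ∘ conj P ≥ (rank P)⁻¹ d_P d_P*` is an instance of the matrix
Cauchy–Schwarz inequality `∑_{i ∈ t} b_i b_i* ≥ (#t)⁻¹ (∑_{i ∈ t} b_i)(∑_{i ∈ t} b_i)*`,
whose defect is the scatter matrix `∑_{i ∈ t} (b_i - m)(b_i - m)*` about the mean `m`.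

The matrix of the theorem is `D_w (N ∘ conj N) D_w*` with `N = M_1 ∘ ⋯ ∘ M_k`, and
`z z* = D_w d_N d_N* D_w*`. As `w` vanishes off `J`, only the principal submatrix `N_{J×J}`,
positive semidefinite by the Schur product theorem, enters; the inequality is applied to it.
-/

open Matrix ComplexOrder Finset

namespace Matrix

variable {K 𝕜 n ι : Type*}

theorem sum_vecMulVec_sub_card_inv_smul_vecMulVec_sum [Field K] [StarRing K] [CharZero K]
    (t : Finset ι) (b : ι → n → K) :
    ∑ i ∈ t, vecMulVec (b i) (star (b i)) -
        (#t : K)⁻¹ • vecMulVec (∑ i ∈ t, b i) (star (∑ i ∈ t, b i)) =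
      ∑ i ∈ t, vecMulVec (b i - (#t : K)⁻¹ • ∑ j ∈ t, b j)
        (star (b i - (#t : K)⁻¹ • ∑ j ∈ t, b j)) := by
  rcases t.eq_empty_or_nonempty with rfl | ht
  · simp
  have hcard : (#t : K) ≠ 0 := by simp [ht.ne_empty]
  ext a c
  simp only [sub_apply, smul_apply, sum_apply, vecMulVec_apply, Pi.sub_apply, Pi.smul_apply,
    Pi.star_apply, star_sub, star_smul, star_sum, star_inv₀, star_natCast, smul_eq_mul,
    Finset.sum_apply, sub_mul, mul_sub, sum_sub_distrib, ← sum_mul, ← mul_sum, sum_const,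
    nsmul_eq_mul]
  field_simp
  ring

theorem posSemidef_sum_vecMulVec_sub_card_inv_smul [RCLike 𝕜] [Finite n] {s t : Finset ι}
    (hts : t ⊆ s) (b : ι → n → 𝕜) :
    (∑ i ∈ s, vecMulVec (b i) (star (b i)) -
      (#t : 𝕜)⁻¹ • vecMulVec (∑ i ∈ t, b i) (star (∑ i ∈ t, b i))).PosSemidef := by
  classical
  rw [← sum_sdiff hts, add_sub_assoc, sum_vecMulVec_sub_card_inv_smul_vecMulVec_sum]
  exact (posSemidef_sum _ fun _ _ => posSemidef_vecMulVec_self_star _).add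
    (posSemidef_sum _ fun _ _ => posSemidef_vecMulVec_self_star _)

theorem PosSemidef.exists_sum_vecMulVec_card_eq_rank [RCLike 𝕜] [Fintype n] [DecidableEq n]
    {P : Matrix n n 𝕜} (hP : P.PosSemidef) :
    ∃ (T : Finset n) (v : n → n → 𝕜), #T = P.rank ∧
      P = ∑ l ∈ T, vecMulVec (v l) (star (v l)) := by
  set U : Matrix n n 𝕜 := (hP.isHermitian.eigenvectorUnitary : Matrix n n 𝕜)
  set ev := hP.isHermitian.eigenvalues
  let v : n → n → 𝕜 := fun l i => (√(ev l) : 𝕜) * U i l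
  have hfull : P = ∑ l, vecMulVec (v l) (star (v l)) := by
    conv_lhs => rw [hP.isHermitian.spectral_theorem, Unitary.conjStarAlgAut_apply]
    ext i j
    rw [mul_apply, sum_apply]
    refine sum_congr rfl fun l _ => ?_
    have hsq : (√(ev l) : 𝕜) * √(ev l) = ev l := by
      rw [← RCLike.ofReal_mul, Real.mul_self_sqrt (hP.eigenvalues_nonneg l)]
    simp only [mul_diagonal, star_apply, vecMulVec_apply, Pi.star_apply, star_mul',
      RCLike.star_def, RCLike.conj_ofReal, Function.comp_apply, v]
    linear_combination (U i l * (starRingEnd 𝕜) (U j l)) * hsq.symm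
  refine ⟨univ.filter (ev · ≠ 0), v, ?_, ?_⟩
  · rw [hP.isHermitian.rank_eq_card_non_zero_eigs, Fintype.card_subtype]
  · rw [hfull, sum_filter_of_ne]
    intro l _ h
    contrapose! h
    ext i j
    simp [v, h, vecMulVec_apply]

theorem PosSemidef.hadamard_conj_sub_rank_inv_smul_vecMulVec_diag [RCLike 𝕜] [Fintype n]
    [DecidableEq n] {P : Matrix n n 𝕜} (hP : P.PosSemidef) :
    (P ⊙ P.map (starRingEnd 𝕜) -
      (P.rank : 𝕜)⁻¹ • vecMulVec P.diag (star P.diag)).PosSemidef := by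
  obtain ⟨T, v, hT, hPv⟩ := hP.exists_sum_vecMulVec_card_eq_rank
  have hP_apply (i j : n) : P i j = ∑ l ∈ T, v l i * star (v l j) := by
    simp [hPv, sum_apply, vecMulVec_apply]
  let b : n × n → n → 𝕜 := fun lp => v lp.1 * star (v lp.2)
  have hhad : P ⊙ P.map (starRingEnd 𝕜) = ∑ lp ∈ T ×ˢ T, vecMulVec (b lp) (star (b lp)) := by
    ext i j
    simp only [hadamard_apply, map_apply, hP_apply, sum_apply, vecMulVec_apply, sum_product,
      map_sum, sum_mul_sum, b, Pi.mul_apply, Pi.star_apply, star_mul', star_star, RCLike.star_def,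
      map_mul, RCLike.conj_conj]
    refine sum_congr rfl fun l _ => sum_congr rfl fun p _ => ?_
    ring
  have hdiag : P.diag = ∑ lp ∈ T.diag, b lp := by
    ext i
    simp [hP_apply, b]
  have hdiag_subset : T.diag ⊆ T ×ˢ T := fun _ hx => by
    obtain ⟨hT, hdiag⟩ := mem_diag.1 hx
    exact mem_product.2 ⟨hT, hdiag ▸ hT⟩
  rw [hhad, hdiag, ← hT, ← T.diag_card]
  exact posSemidef_sum_vecMulVec_sub_card_inv_smul hdiag_subset b

theorem posSemidef_hadamard_prod [RCLike 𝕜] [Finite n] (s : Finset ι) {M : ι → Matrix n n 𝕜}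
    (hM : ∀ t ∈ s, (M t).PosSemidef) : (of fun i j => ∏ t ∈ s, M t i j).PosSemidef := by
  induction s using Finset.cons_induction with
  | empty =>
    convert posSemidef_vecMulVec_self_star (1 : n → 𝕜) using 1
    ext i j
    simp [vecMulVec_apply]
  | cons a s ha ih =>
    have hcons : (of fun i j => ∏ t ∈ s.cons a ha, M t i j) =
        M a ⊙ of fun i j => ∏ t ∈ s, M t i j := by
      ext i j
      simp [hadamard_apply]
    rw [hcons]
    exact (hM a (mem_cons_self a s)).hadamard (ih fun t ht => hM t (mem_cons_of_mem ht))

theorem posSemidef_diagonal_mul_mul_conjTranspose_of_submatrix [RCLike 𝕜] [Fintype n]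
    [DecidableEq n] {X : Matrix n n 𝕜} {J : Finset n}
    (hX : (X.submatrix ((↑) : J → n) (↑)).PosSemidef) {w : n → 𝕜} (hw : ∀ i ∉ J, w i = 0) :
    (diagonal w * X * (diagonal w)ᴴ).PosSemidef := by
  let Q : Matrix J n 𝕜 := (1 : Matrix n n 𝕜).submatrix (↑) id
  let B : Matrix n J 𝕜 := (diagonal w).submatrix id (↑)
  have hQ : Q * X * Qᴴ = X.submatrix (↑) (↑) := by
    ext a b
    simp [Q, mul_apply, one_apply]
  have hBQ : B * Q = diagonal w := by
    ext i j
    rw [mul_apply]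
    refine (sum_coe_sort J fun a => diagonal w i a * (1 : Matrix n n 𝕜) a j).trans ?_
    by_cases hj : j ∈ J
    · simp [one_apply, hj]
    · simp only [one_apply, mul_ite, mul_one, mul_zero, sum_ite_eq', hj, if_false, diagonal_apply]
      split_ifs with hij
      · exact (hij ▸ hw j hj).symm
      · rfl
  have hfactor : diagonal w * X * (diagonal w)ᴴ = B * (Q * X * Qᴴ) * Bᴴ := by
    rw [← hBQ, conjTranspose_mul]
    simp only [Matrix.mul_assoc]
  rw [hfactor, hQ]
  exact hX.mul_mul_conjTranspose_same B

theorem of_prod_diagonal_scalings_eq [RCLike 𝕜] [Fintype n] [DecidableEq n] (s : Finset ι)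
    (u y : ι → n → 𝕜) (M : ι → Matrix n n 𝕜) :
    (of fun i j => ∏ t ∈ s,
        ((diagonal (u t) * M t * (diagonal (u t))ᴴ) i j *
          (diagonal (y t) * (M t).map (starRingEnd 𝕜) * (diagonal (y t))ᴴ) i j)) =
      diagonal (fun i => ∏ t ∈ s, u t i * y t i) *
        ((of fun i j => ∏ t ∈ s, M t i j) ⊙
          (of fun i j => ∏ t ∈ s, M t i j).map (starRingEnd 𝕜)) *
        (diagonal (fun i => ∏ t ∈ s, u t i * y t i))ᴴ := by
  ext i j
  simp only [of_apply, diagonal_conjTranspose, mul_diagonal, diagonal_mul, hadamard_apply,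
    map_apply, Pi.star_apply, RCLike.star_def, map_prod, map_mul, ← prod_mul_distrib]
  exact prod_congr rfl fun t _ => by ring

end Matrix

theorem scaled_schur_product_lower_bound_general
    (n k : ℕ)
    (u y : Fin k → Fin n → ℂ)
    (w : Fin n → ℂ) (hw : w = fun i => ∏ t, (u t i * y t i))
    (M : Fin k → Matrix (Fin n) (Fin n) ℂ) (hM : ∀ t, (M t).PosSemidef)
    (J : Finset (Fin n)) (hJ : ∀ j, j ∈ J ↔ w j ≠ 0)
    (S : Matrix J J ℂ)
    (hS : S = (Matrix.of fun i j : Fin n => ∏ t, M t i j).submatrix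
      Subtype.val Subtype.val)
    (z : Fin n → ℂ) (hz : z = fun i => w i * ∏ t, M t i i) :
    ((Matrix.of fun i j : Fin n => ∏ t,
        ((Matrix.diagonal (u t) * M t * (Matrix.diagonal (u t))ᴴ) i j *
         (Matrix.diagonal (y t) * (M t).map (starRingEnd ℂ) *
            (Matrix.diagonal (y t))ᴴ) i j)) -
      ((S.rank : ℂ))⁻¹ • vecMulVec z (star z)).PosSemidef := by
  set N : Matrix (Fin n) (Fin n) ℂ := of fun i j => ∏ t, M t i j
  have hSpsd : S.PosSemidef := hS ▸ (posSemidef_hadamard_prod univ fun t _ => hM t).submatrix _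
  have hzN :
      vecMulVec z (star z) = diagonal w * vecMulVec N.diag (star N.diag) * (diagonal w)ᴴ := by
    ext i j
    simp only [hz, vecMulVec_apply, Pi.star_apply, star_mul', RCLike.star_def, star_prod,
      diagonal_conjTranspose, mul_diagonal, diagonal_mul, diag_apply, of_apply, N]
    ring
  have hw_supp (i : Fin n) (hi : i ∉ J) : w i = 0 := not_not.1 (mt (hJ i).2 hi)
  rw [of_prod_diagonal_scalings_eq, ← hw, hzN, ← Matrix.smul_mul, ← Matrix.mul_smul,
    ← Matrix.sub_mul, ← Matrix.mul_sub]
  refine posSemidef_diagonal_mul_mul_conjTranspose_of_submatrix ?_ hw_supp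
  convert hSpsd.hadamard_conj_sub_rank_inv_smul_vecMulVec_diag using 1
  subst hS
  ext i j
  simp [hadamard_apply, vecMulVec_apply, N]

theorem scaled_schur_product_lower_bound
    (n k : ℕ) (hn : 1 ≤ n) (hk : 1 ≤ k)
    (u y : Fin k → Fin n → ℂ)
    (w : Fin n → ℂ) (hw : w = fun i => ∏ t, (u t i * y t i)) (hw0 : w ≠ 0)
    (M : Fin k → Matrix (Fin n) (Fin n) ℂ) (hM : ∀ t, (M t).PosSemidef)
    (J : Finset (Fin n)) (hJ : ∀ j, j ∈ J ↔ w j ≠ 0)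
    (S : Matrix J J ℂ)
    (hS : S = (Matrix.of fun i j : Fin n => ∏ t, M t i j).submatrix
      Subtype.val Subtype.val)
    (hS0 : S ≠ 0)
    (z : Fin n → ℂ) (hz : z = fun i => w i * ∏ t, M t i i) :
    ((Matrix.of fun i j : Fin n => ∏ t,
        ((Matrix.diagonal (u t) * M t * (Matrix.diagonal (u t))ᴴ) i j *
         (Matrix.diagonal (y t) * (M t).map (starRingEnd ℂ) *
            (Matrix.diagonal (y t))ᴴ) i j)) -
      ((S.rank : ℂ))⁻¹ • vecMulVec z (star z)).PosSemidef :=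
  scaled_schur_product_lower_bound_general n k u y w hw M hM J hJ S hS z hz
end

section
/- Let n ≥ 1 and let M, N be n × n complex positive semidefinite matrices. Let J = {j : m_{jj} > 0 and n_{jj} > 0}, let D_M and D_N be the diagonal matrices whose diagonals agree with those of M and N respectively (and off-diagonal entries zero), and let C_J(M) be the J × J matrix with (j,k) entry m_{jk} / √(m_{jj} m_{kk}) for j, k ∈ J, and similarly C_J(N). Then M ∘ N ≤ (max_{j ∈ J} ‖C_J(M)_{*j}‖ · ‖C_J(N)_{*j}‖) · D_M D_N in the Loewner order, where C_{*j} denotes the j-th column of C and ‖·‖ the Euclidean norm (with the maximum over the empty set interpreted as 0). -/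
open Matrix ComplexOrder Finset

/-! With `t j = ‖x j‖ * √(m_jj n_jj)` and `a j k = ‖C(M) j k‖ * ‖C(N) j k‖`, the entry bound
`‖m_jk‖² ≤ m_jj m_kk` (a 2 × 2 principal minor) bounds `re (x* (M ∘ N) x)` by
`∑_{j,k ∈ J} t j * t k * a j k`. The matrix `a` is symmetric, so `t j * t k ≤ (t j² + t k²) / 2`
bounds this by the largest column sum of `a` times `∑ t j² = ∑ m_jj n_jj ‖x j‖²`, and by
Cauchy–Schwarz the `j`-th column sum is at most `‖C(M)_{*j}‖ * ‖C(N)_{*j}‖`. -/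

theorem schur_test {ι : Type*} (s : Finset ι) (a : ι → ι → ℝ) (t : ι → ℝ) (c : ℝ)
    (ha : ∀ j ∈ s, ∀ k ∈ s, 0 ≤ a j k) (hrow : ∀ j ∈ s, ∑ k ∈ s, a j k ≤ c)
    (hcol : ∀ k ∈ s, ∑ j ∈ s, a j k ≤ c) :
    ∑ j ∈ s, ∑ k ∈ s, t j * t k * a j k ≤ c * ∑ j ∈ s, t j ^ 2 := by
  calc ∑ j ∈ s, ∑ k ∈ s, t j * t k * a j k
      ≤ ∑ j ∈ s, ∑ k ∈ s, (t j ^ 2 * a j k + t k ^ 2 * a j k) / 2 :=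
        sum_le_sum fun j hj ↦ sum_le_sum fun k hk ↦ by
          nlinarith [mul_nonneg (sq_nonneg (t j - t k)) (ha j hj k hk)]
    _ = (∑ j ∈ s, t j ^ 2 * ∑ k ∈ s, a j k + ∑ k ∈ s, t k ^ 2 * ∑ j ∈ s, a j k) / 2 := by
        simp only [← sum_div, sum_add_distrib, mul_sum]
        rw [sum_comm (f := fun j k ↦ t k ^ 2 * a j k)]
    _ ≤ (∑ j ∈ s, t j ^ 2 * c + ∑ k ∈ s, t k ^ 2 * c) / 2 := by
        gcongr with j hj k hk
        · exact hrow j hj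
        · exact hcol k hk
    _ = c * ∑ j ∈ s, t j ^ 2 := by rw [← sum_mul]; ring

namespace Matrix

variable {n 𝕜 : Type*} [RCLike 𝕜]

open RCLike

lemma PosSemidef.re_apply_self_nonneg {M : Matrix n n 𝕜} (hM : M.PosSemidef) (j : n) :
    0 ≤ re (M j j) :=
  (nonneg_iff.mp hM.diag_nonneg).1

lemma PosSemidef.norm_apply_sq_le {M : Matrix n n 𝕜} (hM : M.PosSemidef) (j k : n) :
    ‖M j k‖ ^ 2 ≤ re (M j j) * re (M k k) := by
  classical
  have hdet := (hM.submatrix ![j, k]).det_nonneg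
  rw [det_fin_two] at hdet
  simp only [submatrix_apply, cons_val_zero, cons_val_one] at hdet
  rw [← hM.1.apply k j, ← hM.1.coe_re_apply_self j, ← hM.1.coe_re_apply_self k, star_def,
    mul_conj, ← ofReal_pow, ← ofReal_mul, ← ofReal_sub, ofReal_nonneg] at hdet
  linarith

/-- The matrix `C_J(M)` of the statement, extended to all indices. Where `re (M j j) * re (M k k) = 0` the entry is the junk value `0`; for
positive semidefinite `M` the entry `M j k` vanishes there too. -/
noncomputable def correlation (M : Matrix n n 𝕜) : Matrix n n 𝕜 :=
  of fun j k ↦ M j k / (√(re (M j j) * re (M k k)) : 𝕜)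

lemma PosSemidef.norm_apply_eq_norm_correlation_mul {M : Matrix n n 𝕜} (hM : M.PosSemidef)
    (j k : n) : ‖M j k‖ = ‖M.correlation j k‖ * (√(re (M j j)) * √(re (M k k))) := by
  rw [correlation, of_apply, norm_div, norm_ofReal,
    abs_of_nonneg (Real.sqrt_nonneg _), ← Real.sqrt_mul (hM.re_apply_self_nonneg j)]
  by_cases h : re (M j j) * re (M k k) = 0
  · have := hM.norm_apply_sq_le j k
    rw [h] at this
    simpa [h] using pow_eq_zero_iff two_ne_zero |>.mp (le_antisymm this (sq_nonneg _))
  · have hpos := (mul_nonneg (hM.re_apply_self_nonneg j) (hM.re_apply_self_nonneg k)).lt_of_ne' h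
    exact (div_mul_cancel₀ _ (Real.sqrt_pos.mpr hpos).ne').symm

lemma IsHermitian.norm_correlation_comm {M : Matrix n n 𝕜} (hM : M.IsHermitian) (j k : n) :
    ‖M.correlation j k‖ = ‖M.correlation k j‖ := by
  simp only [correlation, of_apply, norm_div]
  rw [← hM.apply j k, norm_star, mul_comm]

variable [Fintype n]

lemma re_star_dotProduct_mulVec_le (A : Matrix n n 𝕜) (x : n → 𝕜) :
    re (star x ⬝ᵥ A *ᵥ x) ≤ ∑ j, ∑ k, ‖x j‖ * ‖x k‖ * ‖A j k‖ := by
  calc re (star x ⬝ᵥ A *ᵥ x)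
      ≤ ‖star x ⬝ᵥ A *ᵥ x‖ := re_le_norm _
    _ ≤ ∑ j, ‖x j‖ * ∑ k, ‖A j k‖ * ‖x k‖ := by
        refine (norm_sum_le _ _).trans (sum_le_sum fun j _ ↦ ?_)
        rw [norm_mul, Pi.star_apply, norm_star]
        gcongr
        exact (norm_sum_le _ _).trans_eq (by simp only [norm_mul])
    _ = ∑ j, ∑ k, ‖x j‖ * ‖x k‖ * ‖A j k‖ := by
        simp only [mul_sum]
        exact sum_congr rfl fun j _ ↦ sum_congr rfl fun k _ ↦ by ring

lemma posSemidef_diagonal_sub_of_re_le [DecidableEq n] {H : Matrix n n 𝕜} (hH : H.IsHermitian)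
    (d : n → ℝ) (h : ∀ x, re (star x ⬝ᵥ H *ᵥ x) ≤ ∑ j, d j * ‖x j‖ ^ 2) :
    (diagonal (fun j ↦ (d j : 𝕜)) - H).PosSemidef := by
  refine .of_dotProduct_mulVec_nonneg
    ((isHermitian_diagonal_iff.mpr fun j ↦ conj_ofReal (d j)).sub hH) fun x ↦ ?_
  have hdiag : star x ⬝ᵥ diagonal (fun j ↦ (d j : 𝕜)) *ᵥ x = ((∑ j, d j * ‖x j‖ ^ 2 : ℝ) : 𝕜) := by
    simp only [dotProduct, mulVec_diagonal, Pi.star_apply, ofReal_sum, ofReal_mul, ofReal_pow]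
    refine sum_congr rfl fun j _ ↦ ?_
    rw [← RCLike.conj_mul, star_def]
    ring
  rw [sub_mulVec, dotProduct_sub, hdiag, nonneg_iff, map_sub, map_sub, ofReal_re, ofReal_im,
    hH.im_star_dotProduct_mulVec_self, sub_zero]
  exact ⟨sub_nonneg.mpr (h x), rfl⟩

theorem re_star_dotProduct_hadamard_mulVec_le {M N : Matrix n n 𝕜} (hM : M.PosSemidef)
    (hN : N.PosSemidef) (J : Finset n) (hJ : ∀ j ∉ J, re (M j j) * re (N j j) = 0) (c : ℝ)
    (hcol : ∀ j ∈ J, ∑ k ∈ J, ‖M.correlation k j‖ * ‖N.correlation k j‖ ≤ c) (x : n → 𝕜) :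
    re (star x ⬝ᵥ (M ⊙ N) *ᵥ x) ≤ ∑ j, c * (re (M j j) * re (N j j)) * ‖x j‖ ^ 2 := by
  set t : n → ℝ := fun j ↦ ‖x j‖ * (√(re (M j j)) * √(re (N j j)))
  have hM0 := hM.re_apply_self_nonneg
  have hN0 := hN.re_apply_self_nonneg
  have ht_sq : ∀ j, t j ^ 2 = re (M j j) * re (N j j) * ‖x j‖ ^ 2 := fun j ↦ by
    simp only [t, mul_pow, Real.sq_sqrt (hM0 j), Real.sq_sqrt (hN0 j)]
    ring
  have ht : ∀ j ∉ J, t j = 0 := fun j hj ↦ pow_eq_zero_iff two_ne_zero |>.mp <| by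
    rw [ht_sq, hJ j hj, zero_mul]
  have hentry : ∀ j k, ‖x j‖ * ‖x k‖ * ‖(M ⊙ N) j k‖
      = t j * t k * (‖M.correlation j k‖ * ‖N.correlation j k‖) := fun j k ↦ by
    rw [hadamard_apply, norm_mul, hM.norm_apply_eq_norm_correlation_mul,
      hN.norm_apply_eq_norm_correlation_mul]
    ring
  have hrow : ∀ j ∈ J, ∑ k ∈ J, ‖M.correlation j k‖ * ‖N.correlation j k‖ ≤ c := fun j hj ↦ by
    simpa only [hM.1.norm_correlation_comm j, hN.1.norm_correlation_comm j] using hcol j hj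
  calc re (star x ⬝ᵥ (M ⊙ N) *ᵥ x)
      ≤ ∑ j, ∑ k, ‖x j‖ * ‖x k‖ * ‖(M ⊙ N) j k‖ := re_star_dotProduct_mulVec_le _ _
    _ = ∑ j ∈ J, ∑ k ∈ J, t j * t k * (‖M.correlation j k‖ * ‖N.correlation j k‖) := by
      simp only [hentry]
      rw [← sum_subset (subset_univ J) fun j _ hj ↦ by simp [ht j hj]]
      exact sum_congr rfl fun j _ ↦
        (sum_subset (subset_univ J) fun k _ hk ↦ by simp [ht k hk]).symm
    _ ≤ c * ∑ j ∈ J, t j ^ 2 := schur_test J _ t c (fun _ _ _ _ ↦ by positivity) hrow hcol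
    _ = ∑ j, c * (re (M j j) * re (N j j)) * ‖x j‖ ^ 2 := by
      rw [sum_subset (subset_univ J) fun j _ hj ↦ by simp [ht j hj], mul_sum]
      exact sum_congr rfl fun j _ ↦ by rw [ht_sq]; ring

end Matrix

theorem schur_product_upper_bound_general
    (n : ℕ) (M N : Matrix (Fin n) (Fin n) ℂ)
    (hM : M.PosSemidef) (hN : N.PosSemidef)
    (J : Finset (Fin n)) (hJ : ∀ j, j ∈ J ↔ (0 < (M j j).re ∧ 0 < (N j j).re))
    (CM CN : Fin n → Fin n → ℂ)
    (hCM : CM = fun k j => M k j / (Real.sqrt ((M k k).re * (M j j).re) : ℝ))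
    (hCN : CN = fun k j => N k j / (Real.sqrt ((N k k).re * (N j j).re) : ℝ))
    (c : ℝ)
    (hc : c = ⨆ j ∈ J,
      Real.sqrt (∑ k ∈ J, ‖CM k j‖ ^ 2) *
        Real.sqrt (∑ k ∈ J, ‖CN k j‖ ^ 2)) :
    ((c : ℂ) • (Matrix.diagonal M.diag * Matrix.diagonal N.diag) -
      M.hadamard N).PosSemidef := by
  have hcol : ∀ j ∈ J, ∑ k ∈ J, ‖M.correlation k j‖ * ‖N.correlation k j‖ ≤ c := by
    intro j hj
    calc ∑ k ∈ J, ‖M.correlation k j‖ * ‖N.correlation k j‖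
        ≤ √(∑ k ∈ J, ‖CM k j‖ ^ 2) * √(∑ k ∈ J, ‖CN k j‖ ^ 2) := by
          subst hCM hCN
          exact Real.sum_mul_le_sqrt_mul_sqrt _ _ _
      _ ≤ c := hc ▸ le_ciSup₂ (f := fun j (_ : j ∈ J) ↦
          √(∑ k ∈ J, ‖CM k j‖ ^ 2) * √(∑ k ∈ J, ‖CN k j‖ ^ 2))
          (Set.finite_iUnion fun _ ↦ Set.finite_range _).bddAbove j hj
  have hJ0 : ∀ j ∉ J, (M j j).re * (N j j).re = 0 := fun j hj ↦ by
    rw [hJ, not_and_or, not_lt, not_lt] at hj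
    rcases hj with h | h
    · rw [le_antisymm h (hM.re_apply_self_nonneg j), zero_mul]
    · rw [le_antisymm h (hN.re_apply_self_nonneg j), mul_zero]
  have hD : (c : ℂ) • (diagonal M.diag * diagonal N.diag)
      = diagonal fun j ↦ ((c * ((M j j).re * (N j j).re) : ℝ) : ℂ) := by
    rw [diagonal_mul_diagonal, ← diagonal_smul]
    congr 1
    funext j
    simp only [Pi.smul_apply, diag_apply, smul_eq_mul, Complex.ofReal_mul,
      Complex.conj_eq_iff_re.mp (hM.1.apply j j), Complex.conj_eq_iff_re.mp (hN.1.apply j j)]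
  rw [hD]
  exact posSemidef_diagonal_sub_of_re_le (hM.1.hadamard hN.1) _
    (re_star_dotProduct_hadamard_mulVec_le hM hN J hJ0 c hcol)

theorem schur_product_upper_bound
    (n : ℕ) (hn : 1 ≤ n) (M N : Matrix (Fin n) (Fin n) ℂ)
    (hM : M.PosSemidef) (hN : N.PosSemidef)
    (J : Finset (Fin n)) (hJ : ∀ j, j ∈ J ↔ (0 < (M j j).re ∧ 0 < (N j j).re))
    (CM CN : Fin n → Fin n → ℂ)
    (hCM : CM = fun k j => M k j / (Real.sqrt ((M k k).re * (M j j).re) : ℝ))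
    (hCN : CN = fun k j => N k j / (Real.sqrt ((N k k).re * (N j j).re) : ℝ))
    (c : ℝ)
    (hc : c = ⨆ j ∈ J,
      Real.sqrt (∑ k ∈ J, ‖CM k j‖ ^ 2) *
        Real.sqrt (∑ k ∈ J, ‖CN k j‖ ^ 2)) :
    ((c : ℂ) • (Matrix.diagonal M.diag * Matrix.diagonal N.diag) -
      M.hadamard N).PosSemidef :=
  schur_product_upper_bound_general n M N hM hN J hJ CM CN hCM hCN c hc
end

section
/- Let a, b > 0 be real numbers and let c be a real number with √(ab/2) ≤ c < √(ab). Set d = 2c²/b − a and let A be the 3 × 3 real matrix with rows (a, c, d), (c, b, c), (d, c, a). Then A is doubly nonnegative (positive semidefinite with all entries nonnegative), but A − (1/3) v vᵀ is NOT positive semidefinite, where v = (√a, √b, √a)ᵀ; indeed det(A − (1/3) v vᵀ) = −(2/3)(a − d)(√(ab) − c)² < 0. -/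
/-!
The vector `(1, 0, -1)` is an eigenvector of the centrosymmetric matrix `!![a, c, d; c, b, c; d, c, a]`
with eigenvalue `a - d`, orthogonal to `v = (√a, √b, √a)`; so `det (A - r v vᵀ)` is `a - d` times
the determinant of the compression of `A - r v vᵀ` to the symmetric vectors `(x, y, x)`. The choice
`d b = 2c² - ab` makes this `2 × 2` determinant equal to `-(2/3) (√(ab) - c)²` at `r = 1/3`, while
the same choice keeps `A` positive semidefinite:
`b xᵀ A x = (c x₀ + b x₁ + c x₂)² + (ab - c²) (x₀ - x₂)²`.
-/

open Matrix

namespace Matrix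

theorem posSemidef_centrosymmetric_fin_three {a b c d : ℝ} (hb : 0 < b)
    (hsym : 2 * c ^ 2 ≤ (a + d) * b) (hanti : d ≤ a) :
    (!![a, c, d; c, b, c; d, c, a]).PosSemidef := by
  refine .of_dotProduct_mulVec_nonneg ?_ fun x ↦ ?_
  · ext i j
    fin_cases i <;> fin_cases j <;> simp
  · have sum_of_squares : b * (star x ⬝ᵥ !![a, c, d; c, b, c; d, c, a] *ᵥ x) =
        (c * x 0 + b * x 1 + c * x 2) ^ 2 + ((a + d) * b - 2 * c ^ 2) / 2 * (x 0 + x 2) ^ 2 +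
          (a - d) * b / 2 * (x 0 - x 2) ^ 2 := by
      simp only [dotProduct, Pi.star_apply, star_trivial, mulVec, of_apply, cons_val',
        cons_val_fin_one, Fin.sum_univ_three, cons_val_zero, cons_val_one, cons_val]
      ring
    have hsym' : 0 ≤ (a + d) * b - 2 * c ^ 2 := sub_nonneg.mpr hsym
    have hanti' : 0 ≤ a - d := sub_nonneg.mpr hanti
    refine nonneg_of_mul_nonneg_right ?_ hb
    rw [sum_of_squares]
    positivity

theorem det_centrosymmetric_fin_three_sub_smul_vecMulVec (a b c d r s t : ℝ) :
    (!![a, c, d; c, b, c; d, c, a] - r • vecMulVec ![s, t, s] ![s, t, s]).det =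
      (a - d) * ((a + d - 2 * r * s ^ 2) * (b - r * t ^ 2) - 2 * (c - r * s * t) ^ 2) := by
  rw [det_fin_three]
  simp only [vecMulVec_cons, smul_cons, smul_eq_mul, smul_empty, smul_of, Matrix.sub_apply,
    of_apply, cons_val', cons_val_zero, cons_val_fin_one, Pi.smul_apply, cons_val_one, cons_val]
  ring

theorem not_posSemidef_of_det_neg {n : Type*} [Fintype n] [DecidableEq n] {M : Matrix n n ℝ}
    (h : M.det < 0) : ¬ M.PosSemidef :=
  fun hM ↦ h.not_ge hM.det_nonneg

end Matrix

theorem doubly_nonnegative_counterexample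
    (a b c : ℝ) (ha : 0 < a) (hb : 0 < b)
    (hc1 : Real.sqrt (a * b / 2) ≤ c) (hc2 : c < Real.sqrt (a * b))
    (d : ℝ) (hd : d = 2 * c ^ 2 / b - a)
    (A : Matrix (Fin 3) (Fin 3) ℝ) (hA : A = !![a, c, d; c, b, c; d, c, a])
    (v : Fin 3 → ℝ) (hv : v = ![Real.sqrt a, Real.sqrt b, Real.sqrt a]) :
    A.PosSemidef ∧ (∀ i j, 0 ≤ A i j) ∧
      ¬ (A - (3 : ℝ)⁻¹ • vecMulVec v v).PosSemidef ∧
      (A - (3 : ℝ)⁻¹ • vecMulVec v v).det =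
        -(2 / 3) * (a - d) * (Real.sqrt (a * b) - c) ^ 2 ∧
      (A - (3 : ℝ)⁻¹ • vecMulVec v v).det < 0 := by
  obtain ⟨hc, hc1_sq⟩ := Real.sqrt_le_iff.mp hc1
  have hc2_sq : c ^ 2 < a * b := (Real.lt_sqrt hc).mp hc2
  have hdb : d * b = 2 * c ^ 2 - a * b := by rw [hd]; field_simp
  have hd0 : 0 ≤ d := nonneg_of_mul_nonneg_left (by linarith) hb
  have hda : d < a := lt_of_mul_lt_mul_right (by linarith) hb.le
  have hdet : (A - (3 : ℝ)⁻¹ • vecMulVec v v).det =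
      -(2 / 3) * (a - d) * (Real.sqrt (a * b) - c) ^ 2 := by
    have hs : √a ^ 2 = a := Real.sq_sqrt ha.le
    have ht : √b ^ 2 = b := Real.sq_sqrt hb.le
    have hst : √a ^ 2 * √b ^ 2 = a * b := by rw [hs, ht]
    rw [hA, hv, det_centrosymmetric_fin_three_sub_smul_vecMulVec, Real.sqrt_mul ha.le, hs, ht]
    linear_combination (2 / 3) * (a - d) * hdb + (4 / 9) * (a - d) * hst
  have hdet_neg : (A - (3 : ℝ)⁻¹ • vecMulVec v v).det < 0 := by
    rw [hdet]
    have := mul_pos (sub_pos.mpr hda) (pow_pos (sub_pos.mpr hc2) 2)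
    linarith
  refine ⟨hA ▸ posSemidef_centrosymmetric_fin_three hb (by linarith) hda.le, ?_,
    not_posSemidef_of_det_neg hdet_neg, hdet, hdet_neg⟩
  intro i j
  fin_cases i <;> fin_cases j <;> simp [hA, ha.le, hb.le, hc, hd0]
end

section
/- Let n, k ≥ 1 and let x_{l,1}, …, x_{l,n} be elements of the real Hilbert space ℓ²(ℕ; ℝ) for each l = 1, …, k. Then the n × n real matrix whose (i,j) entry is ∏_{l=1}^k exp(−‖x_{l,i} − x_{l,j}‖²) − 1/n is positive semidefinite. -/
/-!
The product of the Gaussian factors is the Gaussian kernel `exp (-‖X i - X j‖ ^ 2)` of the points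
`X i = (x 1 i, …, x k i)` of the `ℓ²`-sum of `k` copies of `ℓ²`, i.e. the Hadamard square `G ⊙ G`
of `G i j = exp (-‖X i - X j‖ ^ 2 / 2)`. Since
`G i j = exp (-‖X i‖ ^ 2 / 2) * exp ⟪X i, X j⟫ * exp (-‖X j‖ ^ 2 / 2)` and entrywise exponentials of
positive semidefinite matrices are positive semidefinite (Schur's product theorem applied to the
exponential series), `G` is positive semidefinite with unit diagonal. Writing `G = Cᵀ C`, the
quadratic form of `G ⊙ G` at `y` is the squared Frobenius norm of `M = C diag(y) Cᵀ`, which by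
Cauchy–Schwarz is at least `(tr M) ^ 2 / n = (∑ i, y i) ^ 2 / n`.
-/

open Matrix
open scoped ComplexOrder MatrixOrder

namespace Matrix

variable {ι κ R : Type*}

theorem PosSemidef.map_pow {𝕜 : Type*} [RCLike 𝕜] [Finite ι] {A : Matrix ι ι 𝕜}
    (hA : A.PosSemidef) (m : ℕ) : (A.map (· ^ m)).PosSemidef := by
  induction m with
  | zero =>
    convert posSemidef_vecMulVec_self_star (fun _ : ι => (1 : 𝕜)) using 1
    ext i j
    simp [vecMulVec]
  | succ m ih =>
    convert ih.hadamard hA using 1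
    ext i j
    simp [pow_succ]

variable [Fintype ι] [Fintype κ]

theorem PosSemidef.map_exp {A : Matrix ι ι ℝ} (hA : A.PosSemidef) :
    (A.map Real.exp).PosSemidef := by
  refine .of_dotProduct_mulVec_nonneg (hA.isHermitian.map _ fun _ => rfl) fun x => ?_
  have hexp : HasSum (fun m : ℕ => (m.factorial⁻¹ : ℝ) • A.map (· ^ m)) (A.map Real.exp) :=
    Pi.hasSum.2 fun i => Pi.hasSum.2 fun j => by
      simpa [Real.exp_eq_exp_ℝ] using NormedSpace.exp_series_hasSum_exp' (𝕂 := ℝ) (A i j)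
  let quadForm : Matrix ι ι ℝ →+ ℝ :=
    { toFun := fun M => star x ⬝ᵥ M *ᵥ x
      map_zero' := by simp
      map_add' := fun M N => by simp [add_mulVec, dotProduct_add] }
  refine (hexp.map quadForm
    (continuous_const.dotProduct (continuous_id.matrix_mulVec continuous_const))).nonneg fun m => ?_
  simpa [quadForm, smul_mulVec, dotProduct_smul] using
    mul_nonneg (by positivity) ((hA.map_pow m).dotProduct_mulVec_nonneg x)

theorem sq_trace_le_card_mul_trace_mul_transpose [CommRing R] [LinearOrder R]
    [IsStrictOrderedRing R] (M : Matrix ι ι R) :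
    M.trace ^ 2 ≤ Fintype.card ι * (M * Mᵀ).trace := by
  have hdiag : ∑ i, M i i ^ 2 ≤ (M * Mᵀ).trace := by
    simp only [trace, diag, mul_apply, transpose_apply, ← sq]
    exact Finset.sum_le_sum fun i _ =>
      Finset.single_le_sum (f := fun j => M i j ^ 2) (fun j _ => sq_nonneg _) (Finset.mem_univ i)
  calc M.trace ^ 2 ≤ Fintype.card ι * ∑ i, M i i ^ 2 := sq_sum_le_card_mul_sum_sq
    _ ≤ _ := by gcongr

theorem dotProduct_hadamard_transpose_mul_self_mulVec [CommRing R] [DecidableEq ι]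
    (C : Matrix κ ι R) (y : ι → R) :
    y ⬝ᵥ ((Cᵀ * C) ⊙ (Cᵀ * C)) *ᵥ y =
      ((C * diagonal y * Cᵀ) * (C * diagonal y * Cᵀ)ᵀ).trace := by
  rw [dotProduct_mulVec, dotProduct_vecMul_hadamard]
  simp only [transpose_mul, transpose_transpose, diagonal_transpose, Matrix.mul_assoc]
  rw [trace_mul_comm, Matrix.mul_assoc, trace_mul_comm]
  simp only [Matrix.mul_assoc]

theorem dotProduct_of_const_mulVec [CommSemiring R] (c : R) (y : ι → R) :
    y ⬝ᵥ (of fun _ _ : ι => c) *ᵥ y = c * (∑ i, y i) ^ 2 := by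
  simp [dotProduct, mulVec, sq, Finset.mul_sum, mul_comm, mul_left_comm]

theorem PosSemidef.hadamard_self_sub_inv_card {G : Matrix ι ι ℝ} (hG : G.PosSemidef)
    (hG_diag : ∀ i, G i i = 1) :
    (G ⊙ G - of fun _ _ => (Fintype.card ι : ℝ)⁻¹).PosSemidef := by
  classical
  have hJ : (of fun _ _ : ι => (Fintype.card ι : ℝ)⁻¹).IsHermitian := by ext; simp
  refine .of_dotProduct_mulVec_nonneg ((hG.isHermitian.hadamard hG.isHermitian).sub hJ)
    fun y => ?_
  obtain ⟨C, rfl⟩ := CStarAlgebra.nonneg_iff_eq_star_mul_self.mp hG.nonneg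
  rw [star_eq_conjTranspose, conjTranspose_eq_transpose_of_trivial] at hG_diag ⊢
  set M := C * diagonal y * Cᵀ
  have htrace : M.trace = ∑ i, y i := by
    rw [trace_mul_cycle, ← trace_mul_comm]
    simp [trace, hG_diag]
  have hM : 0 ≤ (M * Mᵀ).trace := by
    simpa [conjTranspose_eq_transpose_of_trivial] using
      (posSemidef_self_mul_conjTranspose M).trace_nonneg
  rw [star_trivial, sub_mulVec, dotProduct_sub, dotProduct_hadamard_transpose_mul_self_mulVec,
    dotProduct_of_const_mulVec, sub_nonneg, ← htrace, inv_mul_eq_div]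
  exact div_le_of_le_mul₀ (by positivity) hM
    ((sq_trace_le_card_mul_trace_mul_transpose M).trans_eq (mul_comm _ _))

end Matrix

section GaussianKernel

variable {ι E : Type*} [Fintype ι] [SeminormedAddCommGroup E] [InnerProductSpace ℝ E]

theorem posSemidef_exp_neg_norm_sub_sq_div_two (v : ι → E) :
    (of fun i j => Real.exp (-‖v i - v j‖ ^ 2 / 2)).PosSemidef := by
  let d : ι → ℝ := fun i => Real.exp (-‖v i‖ ^ 2 / 2)
  have hK : (of fun i j => Real.exp (-‖v i - v j‖ ^ 2 / 2)) =
      vecMulVec d d ⊙ (gram ℝ v).map Real.exp := by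
    ext i j
    simp only [of_apply, hadamard_apply, vecMulVec_apply, map_apply, gram_apply, d,
      ← Real.exp_add, norm_sub_sq_real]
    ring_nf
  rw [hK]
  exact (posSemidef_vecMulVec_self_star d).hadamard (posSemidef_gram ℝ v).map_exp

theorem posSemidef_exp_neg_norm_sub_sq_sub_inv_card (v : ι → E) :
    (of fun i j => Real.exp (-‖v i - v j‖ ^ 2) - (Fintype.card ι : ℝ)⁻¹).PosSemidef := by
  convert (posSemidef_exp_neg_norm_sub_sq_div_two v).hadamard_self_sub_inv_card
    (fun i => by simp) using 1
  ext i j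
  simp only [of_apply, Matrix.sub_apply, hadamard_apply, ← Real.exp_add]
  ring_nf

end GaussianKernel

theorem gaussian_kernel_product_lower_bound_general
    (n k : ℕ)
    (x : Fin k → Fin n → lp (fun _ : ℕ => ℝ) 2) :
    (Matrix.of fun i j : Fin n =>
      (∏ l, Real.exp (-‖x l i - x l j‖ ^ 2)) - 1 / n).PosSemidef := by
  let X : Fin n → PiLp 2 fun _ : Fin k => lp (fun _ : ℕ => ℝ) 2 :=
    fun i => WithLp.toLp 2 fun l => x l i
  convert posSemidef_exp_neg_norm_sub_sq_sub_inv_card X using 1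
  ext i j
  simp [X, ← Real.exp_sum, PiLp.norm_sq_eq_of_L2, ← WithLp.toLp_sub]

theorem gaussian_kernel_product_lower_bound
    (n k : ℕ) (hn : 1 ≤ n) (hk : 1 ≤ k)
    (x : Fin k → Fin n → lp (fun _ : ℕ => ℝ) 2) :
    (Matrix.of fun i j : Fin n =>
      (∏ l, Real.exp (-‖x l i - x l j‖ ^ 2)) - 1 / n).PosSemidef :=
  gaussian_kernel_product_lower_bound_general n k x
end

section
/- Let n, k ≥ 1 and let x_{l,1}, …, x_{l,n} be real numbers for each l = 1, …, k. Then the n × n real matrix whose (i,j) entry is ∏_{l=1}^k cos²(x_{l,i} − x_{l,j}) − 1/n is positive semidefinite. -/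
/-!
Let `G i j = ∏ l, cos (x l i - x l j)`. Each factor is the Gram matrix of the vectors
`(cos (x l i), sin (x l i))`, so `G` is positive semidefinite by the Schur product theorem, and it
has unit diagonal; the matrix of the theorem is `G ⊙ G - J / n`. Write `G = Bᵀ B` and
`N = B diag(v) Bᵀ`: then `vᵀ (G ⊙ G) v = tr (N Nᵀ)` and `∑ i, v i = tr N`, so the claim is the
Cauchy–Schwarz inequality `(tr N)² ≤ n tr (N Nᵀ)`.
-/

open Matrix

open scoped MatrixOrder ComplexOrder

namespace Matrix

variable {ι : Type*}

theorem posSemidef_cos_sub [Finite ι] (x : ι → ℝ) :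
    (of fun i j => Real.cos (x i - x j)).PosSemidef := by
  have hsplit : (of fun i j => Real.cos (x i - x j)) =
      vecMulVec (Real.cos ∘ x) (star (Real.cos ∘ x)) +
        vecMulVec (Real.sin ∘ x) (star (Real.sin ∘ x)) := by
    ext i j
    simp [vecMulVec_apply, Real.cos_sub]
  rw [hsplit]
  exact (posSemidef_vecMulVec_self_star _).add (posSemidef_vecMulVec_self_star _)

theorem posSemidef_entrywise_prod {𝕜 κ : Type*} [RCLike 𝕜] [Finite ι] {A : κ → Matrix ι ι 𝕜}
    (s : Finset κ) (hA : ∀ l ∈ s, (A l).PosSemidef) :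
    (of fun i j => ∏ l ∈ s, A l i j).PosSemidef := by
  classical
  induction s using Finset.induction_on with
  | empty =>
    simpa [vecMulVec] using posSemidef_vecMulVec_self_star (1 : ι → 𝕜)
  | insert a s ha ih =>
    have hprod : (of fun i j => ∏ l ∈ insert a s, A l i j) =
        A a ⊙ of fun i j => ∏ l ∈ s, A l i j := by
      ext i j
      simp [Finset.prod_insert ha]
    rw [hprod]
    exact (hA a (s.mem_insert_self a)).hadamard
      (ih fun l hl => hA l (Finset.mem_insert_of_mem hl))

theorem PosSemidef.exists_eq_transpose_mul_self [Fintype ι] {G : Matrix ι ι ℝ}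
    (hG : G.PosSemidef) : ∃ B : Matrix ι ι ℝ, G = Bᵀ * B := by
  classical
  refine ⟨CFC.sqrt G, ?_⟩
  have hS := (CFC.sqrt_nonneg G).posSemidef.isHermitian
  rw [← conjTranspose_eq_transpose_of_trivial, hS, CFC.sqrt_mul_sqrt_self G hG.nonneg]

theorem trace_sq_le_card_mul_trace_mul_transpose [Fintype ι] (N : Matrix ι ι ℝ) :
    N.trace ^ 2 ≤ Fintype.card ι * (N * Nᵀ).trace := by
  rw [← sum_hadamard_eq]
  calc N.trace ^ 2 ≤ Fintype.card ι * ∑ i, N i i ^ 2 := sq_sum_le_card_mul_sum_sq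
    _ ≤ Fintype.card ι * ∑ i, ∑ j, (N ⊙ N) i j := by
      gcongr with i
      simpa [sq] using Finset.single_le_sum (fun j _ => mul_self_nonneg (N i j))
        (Finset.mem_univ i)

theorem sq_sum_mul_diag_le_card_mul_dotProduct_hadamard {κ : Type*} [Fintype ι] [Fintype κ]
    (B : Matrix κ ι ℝ) (v : ι → ℝ) :
    (∑ i, v i * (Bᵀ * B) i i) ^ 2 ≤
      Fintype.card κ * (v ⬝ᵥ ((Bᵀ * B) ⊙ (Bᵀ * B)) *ᵥ v) := by
  classical
  set N := B * diagonal v * Bᵀ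
  have htrace : N.trace = ∑ i, v i * (Bᵀ * B) i i := by
    rw [trace_mul_cycle]
    simp [trace, mul_diagonal, mul_comm]
  have htrace_sq : (N * Nᵀ).trace = v ⬝ᵥ ((Bᵀ * B) ⊙ (Bᵀ * B)) *ᵥ v := by
    rw [dotProduct_mulVec, dotProduct_vecMul_hadamard]
    simp only [N, transpose_mul, transpose_transpose, diagonal_transpose, Matrix.mul_assoc]
    rw [trace_mul_comm]
    simp only [Matrix.mul_assoc]
  rw [← htrace, ← htrace_sq]
  exact trace_sq_le_card_mul_trace_mul_transpose N

theorem PosSemidef.hadamard_self_sub_inv_card_smul_ones [Fintype ι] {G : Matrix ι ι ℝ}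
    (hG : G.PosSemidef) (hdiag : ∀ i, G i i = 1) :
    (G ⊙ G - (Fintype.card ι : ℝ)⁻¹ • of fun _ _ => 1).PosSemidef := by
  obtain ⟨B, rfl⟩ := hG.exists_eq_transpose_mul_self
  refine .of_dotProduct_mulVec_nonneg ?_ fun v => ?_
  · refine (hG.hadamard hG).isHermitian.sub ?_
    ext i j
    simp
  · have hcs := sq_sum_mul_diag_le_card_mul_dotProduct_hadamard B v
    have hq := (hG.hadamard hG).dotProduct_mulVec_nonneg v
    simp only [hdiag, mul_one] at hcs
    simp only [star_trivial] at hq ⊢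
    have hones : v ⬝ᵥ (of fun _ _ => (1 : ℝ)) *ᵥ v = (∑ i, v i) ^ 2 := by
      rw [sq, Finset.sum_mul_sum]
      simp [dotProduct, mulVec, Finset.mul_sum]
    rw [sub_mulVec, dotProduct_sub, smul_mulVec, dotProduct_smul, hones, smul_eq_mul, sub_nonneg]
    rcases (Nat.cast_nonneg (Fintype.card ι) : (0 : ℝ) ≤ _).eq_or_lt with hcard | hcard
    · simpa [← hcard] using hq
    · rwa [inv_mul_le_iff₀ hcard]

end Matrix

theorem novak_conjecture_general
    (n k : ℕ)
    (x : Fin k → Fin n → ℝ) :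
    (Matrix.of fun i j : Fin n =>
      (∏ l, Real.cos (x l i - x l j) ^ 2) - 1 / n).PosSemidef := by
  set G : Matrix (Fin n) (Fin n) ℝ := of fun i j => ∏ l, Real.cos (x l i - x l j)
  have hG : G.PosSemidef := by
    simpa using posSemidef_entrywise_prod Finset.univ fun l _ => posSemidef_cos_sub (x l)
  have hdiag : ∀ i, G i i = 1 := by simp [G]
  convert hG.hadamard_self_sub_inv_card_smul_ones hdiag using 1
  ext i j
  simp [G, Finset.prod_pow, ← sq]

theorem novak_conjecture
    (n k : ℕ) (hn : 1 ≤ n) (hk : 1 ≤ k)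
    (x : Fin k → Fin n → ℝ) :
    (Matrix.of fun i j : Fin n =>
      (∏ l, Real.cos (x l i - x l j) ^ 2) - 1 / n).PosSemidef :=
  novak_conjecture_general n k x
end
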